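/- arXiv:2101.03148 — 6 statements merged into one kernel-verified Lean document; each statement's English description precedes it below -/
import Mathlib

section
/- Let Γ be a finite simple graph with vertex set {1,…,d} and edge set E, with bond dimensions m_e ≥ 1 and local dimensions n_v ≥ 1. Fix a vertex v of degree k with incident edges e_1,…,e_k ordered so that m_{e_1} ≤ ⋯ ≤ m_{e_k}, and suppose the bond dimension is overabundant at v: m_{e_k} > n_v · m_{e_1}⋯m_{e_{k−1}}. Define new bond dimensions m̄ by m̄_{e_k} = n_v · m_{e_1}⋯m_{e_{k−1}} and m̄_e = m_e for all other edges. Then TNS°(Γ,m,n) = TNS°(Γ,m̄,n); in particular the corresponding tensor network varieties (Zariski closures) coincide. -/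
open scoped BigOperators

/-- A finite simple graph on vertex set `Fin d`, with edge type `E`: each edge has an
ordered pair of endpoints, there are no loops, and distinct edges have distinct
(unordered) endpoint pairs. -/
structure GraphData (d : ℕ) (E : Type) where
  ends : E → Fin d × Fin d
  no_loops : ∀ e, (ends e).1 ≠ (ends e).2
  simple : Function.Injective fun e => ({(ends e).1, (ends e).2} : Finset (Fin d))

/-- Incidence: `v` is an endpoint of `e`. -/
def GraphData.Inc {d : ℕ} {E : Type} (G : GraphData d E) (v : Fin d) (e : E) : Prop :=
  v = (G.ends e).1 ∨ v = (G.ends e).2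

instance {d : ℕ} {E : Type} (G : GraphData d E) (v : Fin d) : DecidablePred (G.Inc v) :=
  fun _ => inferInstanceAs (Decidable (_ ∨ _))

/-- The set `TNS°(Γ,m,n)` of tensor network states, in coordinates:
`T(i) = ∑_{j : ∀ e, Fin (m e)} ∏_v X_v(i_v, j|_{δ(v)})`. -/
def TNS {d : ℕ} {E : Type} [Fintype E] [DecidableEq E] (G : GraphData d E)
    (m : E → ℕ) (n : Fin d → ℕ) : Set ((∀ v : Fin d, Fin (n v)) → ℂ) :=
  { T | ∃ X : ∀ v : Fin d, Fin (n v) → ((∀ e : {e : E // G.Inc v e}, Fin (m e.1)) → ℂ),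
      ∀ i, T i = ∑ j : (∀ e : E, Fin (m e)), ∏ v : Fin d, X v (i v) fun e => j e.1 }

/-- Dimension of a subset of a complex coordinate space: the Krull dimension of the
coordinate ring of its Zariski closure. -/
noncomputable def sdim {ι : Type} (S : Set (ι → ℂ)) : WithBot (WithTop ℕ) :=
  ringKrullDim (MvPolynomial ι ℂ ⧸ MvPolynomial.vanishingIdeal ℂ S)

/-!
Viewed as a linear map out of the bond space `ℂ^{m e₀}`, the coefficient tensor at `v₀` lands in
a space of dimension `K = n v₀ · ∏_{e ∋ v₀, e ≠ e₀} m e`, so it factors as a `K × m e₀` matrix `P`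
followed by the tensor that embeds `ℂ^K` into `ℂ^{m e₀}` along an injection of index sets.
Moving `P` along `e₀` into the tensor at the other endpoint leaves the state unchanged, and
afterwards only `K` values of the bond index at `e₀` carry nonzero coefficients, so the bond can be
truncated to dimension `K`. Conversely, padding with zeros shows that `TNS` grows with the bond
dimensions.
-/

namespace GraphData

variable {d : ℕ} {E : Type} (G : GraphData d E)

theorem exists_other_end {v : Fin d} {e : E} (h : G.Inc v e) :
    ∃ w, G.Inc w e ∧ v ≠ w ∧ ∀ u, G.Inc u e → u = v ∨ u = w := by
  rcases h with rfl | rfl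
  · exact ⟨_, Or.inr rfl, G.no_loops e, fun u hu => hu⟩
  · exact ⟨_, Or.inl rfl, (G.no_loops e).symm, fun u hu => hu.symm⟩

abbrev Coeffs (m : E → ℕ) (n : Fin d → ℕ) : Type :=
  ∀ v : Fin d, Fin (n v) → (∀ e : {e : E // G.Inc v e}, Fin (m e.1)) → ℂ

variable [Fintype E] [DecidableEq E]

def state (m : E → ℕ) {n : Fin d → ℕ} (X : G.Coeffs m n) : (∀ v : Fin d, Fin (n v)) → ℂ :=
  fun i => ∑ j : (∀ e : E, Fin (m e)), ∏ v : Fin d, X v (i v) fun e => j e.1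

theorem TNS_eq_range (m : E → ℕ) (n : Fin d → ℕ) :
    TNS G m n = Set.range (G.state m (n := n)) := by
  ext T
  simp [TNS, state, funext_iff, eq_comm]

theorem state_eq_state_castLE {m m' : E → ℕ} {n : Fin d → ℕ} (hle : m' ≤ m) (X : G.Coeffs m n)
    (hX : ∀ (i : ∀ v, Fin (n v)) (j : ∀ e, Fin (m e)), (∃ e, m' e ≤ j e) →
      ∏ v, X v (i v) (fun e => j e.1) = 0) :
    G.state m X = G.state m' (n := n) fun v i j => X v i fun e => Fin.castLE (hle e.1) (j e) := by
  funext i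
  refine (Fintype.sum_of_injective (fun (j : ∀ e, Fin (m' e)) e => Fin.castLE (hle e) (j e))
    ?_ _ _ ?_ fun j => rfl).symm
  · intro j j' h
    funext e
    exact Fin.castLE_injective _ (congrFun h e)
  · intro j hj
    refine hX i j ?_
    by_contra! h
    exact hj ⟨fun e => ⟨j e, h e⟩, rfl⟩

theorem TNS_mono {m m' : E → ℕ} {n : Fin d → ℕ} (hle : m' ≤ m) : TNS G m' n ⊆ TNS G m n := by
  rw [TNS_eq_range, TNS_eq_range]
  rintro _ ⟨X, rfl⟩
  let Y : G.Coeffs m n := fun v i j =>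
    if h : ∀ e, (j e : ℕ) < m' e.1 then X v i fun e => ⟨j e, h e⟩ else 0
  refine ⟨Y, (G.state_eq_state_castLE hle Y ?_).trans ?_⟩
  · rintro i j ⟨e, he⟩
    refine Finset.prod_eq_zero (Finset.mem_univ (G.ends e).1) (dif_neg ?_)
    exact fun h => (h ⟨e, Or.inl rfl⟩).not_ge he
  · simp [Y]

/-- Gauge invariance: a matrix `P` on the edge `e₀` may be moved from the tensor at `v₀` to the
tensor at the other endpoint `w₀`. -/
theorem state_eq_of_transfer {m : E → ℕ} {n : Fin d → ℕ} {e₀ : E} {v₀ w₀ : Fin d}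
    (hvw : v₀ ≠ w₀) (hinc : ∀ v, G.Inc v e₀ → v = v₀ ∨ v = w₀)
    (P : Fin (m e₀) → Fin (m e₀) → ℂ) (X Y : G.Coeffs m n)
    (hv₀ : ∀ i (j : ∀ e, Fin (m e)), X v₀ i (fun e => j e.1)
      = ∑ b, Y v₀ i (fun e => Function.update j e₀ b e.1) * P b (j e₀))
    (hw₀ : ∀ i (j : ∀ e, Fin (m e)), Y w₀ i (fun e => j e.1)
      = ∑ a, P (j e₀) a * X w₀ i (fun e => Function.update j e₀ a e.1))
    (hrest : ∀ v, v ≠ v₀ → v ≠ w₀ → Y v = X v) :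
    G.state m X = G.state m Y := by
  funext i
  let s : Finset (Fin d) := {v₀, w₀}
  have hsplit (Z : G.Coeffs m n) (j : ∀ e, Fin (m e)) : ∏ v, Z v (i v) (fun e => j e.1)
      = Z v₀ (i v₀) (fun e => j e.1) * Z w₀ (i w₀) (fun e => j e.1)
        * ∏ v ∈ sᶜ, Z v (i v) (fun e => j e.1) := by
    rw [← Finset.prod_mul_prod_compl s, Finset.prod_pair hvw]
  let C : (∀ e, Fin (m e)) → ℂ := fun j => ∏ v ∈ sᶜ, X v (i v) fun e => j e.1
  have hCY (j : ∀ e, Fin (m e)) : ∏ v ∈ sᶜ, Y v (i v) (fun e => j e.1) = C j := by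
    refine Finset.prod_congr rfl fun v hv => ?_
    simp only [s, Finset.mem_compl, Finset.mem_insert, Finset.mem_singleton, not_or] at hv
    rw [hrest v hv.1 hv.2]
  have hC (j : ∀ e, Fin (m e)) (b : Fin (m e₀)) : C (Function.update j e₀ b) = C j := by
    refine Finset.prod_congr rfl fun v hv => ?_
    simp only [s, Finset.mem_compl, Finset.mem_insert, Finset.mem_singleton, not_or] at hv
    congr 1
    funext e
    refine Function.update_of_ne (fun h => ?_) _ _
    rcases hinc v (h ▸ e.2) with h' | h'
    exacts [hv.1 h', hv.2 h']
  -- `(j, b) ↦ (j[e₀ ↦ b], j e₀)` hands the contracted bond index from `v₀`'s side to `w₀`'s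
  let φ : Equiv.Perm ((∀ e, Fin (m e)) × Fin (m e₀)) :=
    Function.Involutive.toPerm (fun p => (Function.update p.1 e₀ p.2, p.1 e₀)) fun p => by simp
  calc G.state m X i
      = ∑ j, X v₀ (i v₀) (fun e => j e.1) * X w₀ (i w₀) (fun e => j e.1) * C j := by
        simp only [state, hsplit X]; rfl
    _ = ∑ p : (∀ e, Fin (m e)) × Fin (m e₀), Y v₀ (i v₀) (fun e => Function.update p.1 e₀ p.2 e.1)
          * P p.2 (p.1 e₀) * X w₀ (i w₀) (fun e => p.1 e.1) * C p.1 := by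
        simp only [Fintype.sum_prod_type, hv₀, Finset.sum_mul]
    _ = ∑ p : (∀ e, Fin (m e)) × Fin (m e₀), Y v₀ (i v₀) (fun e => p.1 e.1)
          * P (p.1 e₀) p.2 * X w₀ (i w₀) (fun e => Function.update p.1 e₀ p.2 e.1) * C p.1 := by
        refine Fintype.sum_equiv φ _ _ fun p => ?_
        have hφ : φ p = (Function.update p.1 e₀ p.2, p.1 e₀) := rfl
        simp [hφ, hC]
    _ = ∑ j, Y v₀ (i v₀) (fun e => j e.1) * Y w₀ (i w₀) (fun e => j e.1) * C j := by
        simp only [Fintype.sum_prod_type, hw₀, Finset.mul_sum, Finset.sum_mul, mul_assoc]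
    _ = G.state m Y i := by
        simp only [state, hsplit Y, hCY]

theorem exists_factorization_through_bond {m : E → ℕ} {n : Fin d → ℕ} {v₀ : Fin d} {e₀ : E}
    (he₀ : G.Inc v₀ e₀) {N : ℕ}
    (hKN : n v₀ * ∏ e : {e : E // G.Inc v₀ e ∧ e ≠ e₀}, m e.1 ≤ N) (hN : N ≤ m e₀)
    (A : Fin (n v₀) → (∀ e : {e : E // G.Inc v₀ e}, Fin (m e.1)) → ℂ) :
    ∃ (B : Fin (n v₀) → (∀ e : {e : E // G.Inc v₀ e}, Fin (m e.1)) → ℂ)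
      (P : Fin (m e₀) → Fin (m e₀) → ℂ),
      (∀ i j, N ≤ j ⟨e₀, he₀⟩ → B i j = 0) ∧
      ∀ i (j : ∀ e, Fin (m e)),
        A i (fun e => j e.1) = ∑ b, B i (fun e => Function.update j e₀ b e.1) * P b (j e₀) := by
  let O := ∀ e : {e : E // G.Inc v₀ e ∧ e ≠ e₀}, Fin (m e.1)
  have hcard : Fintype.card (Fin (n v₀) × O) ≤ N := by simpa [O, Fintype.card_pi] using hKN
  let code (k : Fin (n v₀) × O) : Fin (m e₀) :=
    Fin.castLE hN (Fin.castLE hcard (Fintype.equivFin _ k))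
  have code_lt (k) : (code k : ℕ) < N := ((Fintype.equivFin _ k).2).trans_le hcard
  have code_injective : Function.Injective code := fun k k' h =>
    (Fintype.equivFin _).injective (Fin.castLE_injective _ (Fin.castLE_injective _ h))
  let others (j : ∀ e : {e : E // G.Inc v₀ e}, Fin (m e.1)) : O := fun e => j ⟨e.1, e.2.1⟩
  let join (o : O) (a : Fin (m e₀)) : ∀ e : {e : E // G.Inc v₀ e}, Fin (m e.1) := fun e =>
    if h : e.1 = e₀ then Fin.cast (congrArg m h.symm) a else o ⟨e.1, e.2, h⟩
  have join_others (j : ∀ e, Fin (m e)) :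
      join (others fun e => j e.1) (j e₀) = fun e : {e : E // G.Inc v₀ e} => j e.1 := by
    funext ⟨e, he⟩
    by_cases h : e = e₀
    · subst h
      simp [join]
    · simp [join, others, h]
  have others_update (j : ∀ e, Fin (m e)) (b : Fin (m e₀)) :
      (others fun e => Function.update j e₀ b e.1) = others fun e => j e.1 := by
    funext e
    exact Function.update_of_ne e.2.2 _ _
  let P (b a : Fin (m e₀)) : ℂ := ∑ k, if code k = b then A k.1 (join k.2 a) else 0
  have hP (k : Fin (n v₀) × O) (a : Fin (m e₀)) : P (code k) a = A k.1 (join k.2 a) := by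
    simp [P, code_injective.eq_iff]
  refine ⟨fun i j => if j ⟨e₀, he₀⟩ = code (i, others j) then 1 else 0, P,
    fun i j hj => if_neg fun h => (code_lt _).not_ge (h ▸ hj), fun i j => ?_⟩
  simp only [others_update, Function.update_self, ite_mul, one_mul, zero_mul,
    Finset.sum_ite_eq', Finset.mem_univ, if_true, hP, join_others]

theorem exists_state_eq_supported_below {m : E → ℕ} {n : Fin d → ℕ} {v₀ : Fin d} {e₀ : E}
    (he₀ : G.Inc v₀ e₀) {N : ℕ}
    (hKN : n v₀ * ∏ e : {e : E // G.Inc v₀ e ∧ e ≠ e₀}, m e.1 ≤ N) (hN : N ≤ m e₀)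
    (X : G.Coeffs m n) :
    ∃ Y : G.Coeffs m n, G.state m X = G.state m Y ∧
      ∀ i (j : ∀ e, Fin (m e)), N ≤ j e₀ → Y v₀ i (fun e => j e.1) = 0 := by
  obtain ⟨w₀, hw₀, hvw, hinc⟩ := G.exists_other_end he₀
  obtain ⟨B, P, hB, hXB⟩ := G.exists_factorization_through_bond he₀ hKN hN (X v₀)
  let Y : G.Coeffs m n := Function.update (Function.update X v₀ B)
    w₀ fun i j => ∑ a, P (j ⟨e₀, hw₀⟩) a * X w₀ i (Function.update j ⟨e₀, hw₀⟩ a)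
  have hYv₀ : Y v₀ = B := by
    simp only [Y, Function.update_of_ne hvw, Function.update_self]
  refine ⟨Y, G.state_eq_of_transfer hvw hinc P X Y (by simpa only [hYv₀] using hXB)
    (fun i j => ?_) (fun v hv hw => ?_), fun i j hj => hYv₀ ▸ hB i _ hj⟩
  · simp only [Y, Function.update_self]
    refine Finset.sum_congr rfl fun a _ => ?_
    congr 2
    exact (Function.update_comp_eq_of_injective' j Subtype.val_injective ⟨e₀, hw₀⟩ a).symm
  · simp only [Y, Function.update_of_ne hv, Function.update_of_ne hw]

theorem TNS_subset_update {m : E → ℕ} {n : Fin d → ℕ} {v₀ : Fin d} {e₀ : E}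
    (he₀ : G.Inc v₀ e₀) {N : ℕ}
    (hKN : n v₀ * ∏ e : {e : E // G.Inc v₀ e ∧ e ≠ e₀}, m e.1 ≤ N) (hN : N ≤ m e₀) :
    TNS G m n ⊆ TNS G (Function.update m e₀ N) n := by
  rw [TNS_eq_range, TNS_eq_range]
  rintro _ ⟨X, rfl⟩
  obtain ⟨Y, hXY, hY⟩ := G.exists_state_eq_supported_below he₀ hKN hN X
  refine ⟨_, (hXY.trans (G.state_eq_state_castLE (update_le_self_iff.2 hN) Y ?_)).symm⟩
  rintro i j ⟨e, he⟩
  rcases eq_or_ne e e₀ with rfl | hne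
  · exact Finset.prod_eq_zero (Finset.mem_univ v₀) (hY _ j (by simpa using he))
  · rw [Function.update_of_ne hne] at he
    exact absurd (j e).2 he.not_gt

end GraphData

theorem TNS_overabundant_general {d : ℕ} {E : Type} [Fintype E]
    [DecidableEq E] (G : GraphData d E) (m : E → ℕ) (n : Fin d → ℕ)
    (v₀ : Fin d) (e₀ : E) (he₀ : G.Inc v₀ e₀)
    (hover : n v₀ * (∏ e : {e : E // G.Inc v₀ e ∧ e ≠ e₀}, m e.1) < m e₀) :
    TNS G m n
      = TNS G (Function.update m e₀
          (n v₀ * ∏ e : {e : E // G.Inc v₀ e ∧ e ≠ e₀}, m e.1)) n :=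
  (G.TNS_subset_update he₀ le_rfl hover.le).antisymm
    (G.TNS_mono (update_le_self_iff.2 hover.le))

/-- Lemma (reduction of overabundant bond dimension): if an edge `e₀` incident to `v₀`
satisfies `m_{e₀} > n_{v₀} · ∏_{e ∋ v₀, e ≠ e₀} m_e`, then replacing `m_{e₀}` by
`n_{v₀} · ∏_{e ∋ v₀, e ≠ e₀} m_e` does not change the set of tensor network states. -/
theorem TNS_overabundant {d : ℕ} {E : Type} [Fintype E]
    [DecidableEq E] (G : GraphData d E) (m : E → ℕ) (n : Fin d → ℕ)
    (hm : ∀ e, 1 ≤ m e) (hn : ∀ v, 1 ≤ n v)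
    (v₀ : Fin d) (e₀ : E) (he₀ : G.Inc v₀ e₀)
    (hover : n v₀ * (∏ e : {e : E // G.Inc v₀ e ∧ e ≠ e₀}, m e.1) < m e₀) :
    TNS G m n
      = TNS G (Function.update m e₀
          (n v₀ * ∏ e : {e : E // G.Inc v₀ e ∧ e ≠ e₀}, m e.1)) n :=
  TNS_overabundant_general G m n v₀ e₀ he₀ hover
end

section
/- Let Γ be a finite simple graph with vertex set {1,…,d} and edge set E, with bond dimensions m_e ≥ 1, and let T = T(Γ,m) ∈ W_1⊗⋯⊗W_d be the graph tensor. For an edge e = {v,w} ∈ E (with a chosen ordering v,w of its endpoints) and a matrix Y ∈ M_{m_e}(ℂ), let g_e(Y) ∈ End(W_1)⊕⋯⊕End(W_d) be the tuple whose v-component acts as Y on the factor ℂ^{m_e} of W_v indexed by e and as the identity on the other factors, whose w-component acts as −Yᵀ on the factor ℂ^{m_e} of W_w indexed by e and as the identity on the other factors, and whose other components are 0. Then the annihilator of T under the Leibniz action equals the sum of the gauge Lie algebras and the traceless scalar tuples: ann(T) = ( Σ_{e∈E} { g_e(Y) : Y ∈ M_{m_e}(ℂ) } ) + { (x_1·Id_{W_1},…,x_d·Id_{W_d})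 : x_1+⋯+x_d = 0 }. -/
/-!
In the product basis, `T(Γ,m)` is the indicator of the indices that agree at both ends of every
edge, so `(X.T)(β) = ∑ᵥ [β consistent away from v] · X_v(β_v, ν_v β)`, where `ν_v β` reads the
indices at `v` off the neighbours of `v`. Evaluating this at indices that are consistent except
at one vertex shows: an entry of `X_v` between local indices differing on two edges vanishes;
an entry differing on the single edge `e` does not depend on the other edges at `v`, and is
minus the transposed entry at the other end of `e`; and the increments of the diagonal of
`X_v` along an edge depend only on that edge and cancel against those at its other end, so the
diagonal is a sum over the edges at `v`. These are exactly the entries of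
`∑ₑ g_e(Y_e) + (x_v Id)_v` with `∑ x_v = 0`. Conversely, the two ends of an edge contribute
opposite terms for `g_e(Y)`, and a scalar tuple multiplies `T` by `∑ x_v = 0`.
-/

open scoped BigOperators

/-- The graph tensor `T(Γ,m)`, in coordinates with respect to the standard product bases
of the vertex spaces `W_v = ⨂_{e ∋ v} ℂ^{m_e}`. -/
noncomputable def graphTensor {d : ℕ} {E : Type} [Fintype E] [DecidableEq E]
    (G : GraphData d E) (m : E → ℕ) :
    (∀ v : Fin d, (∀ e : {e : E // G.Inc v e}, Fin (m e.1))) → ℂ :=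
  fun β => ∑ j : (∀ e : E, Fin (m e)), ∏ v : Fin d,
    (if β v = (fun e : {e : E // G.Inc v e} => j e.1) then (1 : ℂ) else 0)

open Function

section General

variable {ι : Type*} [Fintype ι] {κ : ι → Type*}

theorem Fintype.sum_dite_eq_sum_subtype {M : Type*} [AddCommMonoid M] (p : ι → Prop)
    [DecidablePred p] (f : ∀ i, p i → M) :
    ∑ i, (if h : p i then f i h else 0) = ∑ i : {i // p i}, f i.1 i.2 := by
  rw [Finset.sum_dite, Finset.sum_const_zero, add_zero]
  exact Finset.sum_bij' (fun i _ => ⟨i.1, (Finset.mem_filter.1 i.2).2⟩)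
    (fun i _ => ⟨i.1, by simpa using i.2⟩) (by simp) (by simp) (by simp) (by simp) (by simp)

theorem eq_add_sum_update_sub [DecidableEq ι] {M : Type*} [AddCommGroup M] (F : (∀ i, κ i) → M)
    (b : ∀ i, κ i)
    (hF : ∀ u i s, F (update u i s) - F u = F (update b i s) - F (update b i (u i)))
    (u : ∀ i, κ i) : F u = F b + ∑ i, (F (update b i (u i)) - F b) := by
  suffices h : ∀ t : Finset ι, F (t.piecewise u b) = F b + ∑ i ∈ t, (F (update b i (u i)) - F b) by
    simpa using h Finset.univ
  intro t
  induction t using Finset.induction_on with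
  | empty => simp
  | insert i t hi ih =>
    have hb : t.piecewise u b i = b i := Finset.piecewise_eq_of_notMem _ _ _ hi
    have step := hF (t.piecewise u b) i (u i)
    rw [hb, update_eq_self] at step
    rw [Finset.piecewise_insert, Finset.sum_insert hi, eq_add_of_sub_eq step, ih]
    abel

/-- The coordinate `β` of the Leibniz action `X.T`, for matrices `X i` and a tensor `T` written
in the product basis indexed by `∀ i, κ i`. -/
def leibniz [DecidableEq ι] [∀ i, Fintype (κ i)] (X : ∀ i, κ i → κ i → ℂ) (T : (∀ i, κ i) → ℂ)
    (β : ∀ i, κ i) : ℂ :=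
  ∑ i, ∑ γ : κ i, X i (β i) γ * T (update β i γ)

end General

namespace GraphData

variable {d : ℕ} {E : Type}

section Graph

variable (G : GraphData d E)

theorem inc_fst (e : E) : G.Inc (G.ends e).1 e := Or.inl rfl

theorem inc_snd (e : E) : G.Inc (G.ends e).2 e := Or.inr rfl

/-- The endpoint of `e` other than `v`, when `v` is an endpoint of `e`. -/
def other (v : Fin d) (e : E) : Fin d :=
  if v = (G.ends e).1 then (G.ends e).2 else (G.ends e).1

variable {G}

theorem other_ne (v : Fin d) (e : E) : G.other v e ≠ v := by
  unfold other
  split_ifs with h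
  · exact h ▸ (G.no_loops e).symm
  · exact Ne.symm h

theorem inc_other (v : Fin d) (e : E) : G.Inc (G.other v e) e := by
  unfold other
  split_ifs
  exacts [G.inc_snd e, G.inc_fst e]

theorem eq_other {v w : Fin d} {e : E} (hv : G.Inc v e) (hw : G.Inc w e) (hwv : w ≠ v) :
    w = G.other v e := by
  unfold other
  rcases hv with rfl | rfl <;> rcases hw with rfl | rfl
  · exact absurd rfl hwv
  · simp
  · simp [(G.no_loops e).symm]
  · exact absurd rfl hwv

theorem eq_of_inc {v w : Fin d} {e e' : E} (hvw : v ≠ w) (hv : G.Inc v e) (hw : G.Inc w e)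
    (hv' : G.Inc v e') (hw' : G.Inc w e') : e = e' := by
  have ends_eq : ∀ {e}, G.Inc v e → G.Inc w e →
      ({(G.ends e).1, (G.ends e).2} : Finset (Fin d)) = {v, w} := by
    intro e hv hw
    rcases hv with rfl | rfl <;> rcases hw with h | h
    · exact absurd h.symm hvw
    · rw [h]
    · rw [h, Finset.pair_comm]
    · exact absurd h.symm hvw
  exact G.simple (by simp only [ends_eq hv hw, ends_eq hv' hw'])

theorem not_inc_of_ne {v w x : Fin d} {e : E} (hvw : v ≠ w) (hv : G.Inc v e) (hw : G.Inc w e)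
    (hxv : x ≠ v) (hxw : x ≠ w) : ¬ G.Inc x e :=
  fun hx => hxw ((eq_other hv hx hxv).trans (eq_other hv hw hvw.symm).symm)

end Graph

section Index

variable (G : GraphData d E) (m : E → ℕ)

abbrev LocalIndex (v : Fin d) := ∀ e : {e : E // G.Inc v e}, Fin (m e.1)

abbrev Index := ∀ v : Fin d, G.LocalIndex m v

variable {m}

def restrict (j : ∀ e, Fin (m e)) : G.Index m := fun _ e => j e.1

def ConsistentAt (β : G.Index m) (e : E) : Prop :=
  ∀ v w (hv : G.Inc v e) (hw : G.Inc w e), β v ⟨e, hv⟩ = β w ⟨e, hw⟩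

def ConsistentAway (β : G.Index m) (v : Fin d) : Prop :=
  ∀ e, ¬ G.Inc v e → G.ConsistentAt β e

instance (β : G.Index m) (e : E) : Decidable (G.ConsistentAt β e) := by
  unfold ConsistentAt; infer_instance

def nbrIndex (β : G.Index m) (v : Fin d) : G.LocalIndex m v :=
  fun e => β (G.other v e.1) ⟨e.1, G.inc_other v e.1⟩

variable {G}

theorem restrict_injective : Injective (G.restrict (m := m)) :=
  fun _ _ h => funext fun e => congrFun (congrFun h (G.ends e).1) ⟨e, G.inc_fst e⟩

theorem consistentAt_restrict (j : ∀ e, Fin (m e)) (e : E) : G.ConsistentAt (G.restrict j) e :=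
  fun _ _ _ _ => rfl

theorem exists_restrict_eq {β : G.Index m} (h : ∀ e, G.ConsistentAt β e) :
    ∃ j, G.restrict j = β :=
  ⟨fun e => β _ ⟨e, G.inc_fst e⟩, funext fun _ => funext fun e => h e.1 _ _ _ _⟩

theorem consistentAt_iff {β : G.Index m} {v : Fin d} {e : E} (hv : G.Inc v e) :
    G.ConsistentAt β e ↔ β v ⟨e, hv⟩ = G.nbrIndex β v ⟨e, hv⟩ := by
  refine ⟨fun h => h _ _ _ _, fun h => ?_⟩
  have eq_at_v : ∀ w (hw : G.Inc w e), β w ⟨e, hw⟩ = β v ⟨e, hv⟩ := by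
    intro w hw
    by_cases hwv : w = v
    · subst hwv; rfl
    · obtain rfl := eq_other hv hw hwv
      exact h.symm
  exact fun w w' hw hw' => (eq_at_v w hw).trans (eq_at_v w' hw').symm

theorem nbrIndex_eq (β : G.Index m) {v w : Fin d} {e : E} (hv : G.Inc v e) (hw : G.Inc w e)
    (hwv : w ≠ v) : G.nbrIndex β v ⟨e, hv⟩ = β w ⟨e, hw⟩ := by
  obtain rfl := eq_other hv hw hwv
  rfl

theorem consistentAt_update_of_not_inc {β : G.Index m} {v : Fin d} {e : E} (hv : ¬ G.Inc v e)
    (γ : G.LocalIndex m v) : G.ConsistentAt (update β v γ) e ↔ G.ConsistentAt β e := by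
  have away : ∀ w (hw : G.Inc w e), update β v γ w ⟨e, hw⟩ = β w ⟨e, hw⟩ := by
    intro w hw
    rw [update_of_ne (by rintro rfl; exact hv hw)]
  simp only [ConsistentAt, away]

theorem consistentAt_update_of_inc {β : G.Index m} {v : Fin d} {e : E} (hv : G.Inc v e)
    (γ : G.LocalIndex m v) :
    G.ConsistentAt (update β v γ) e ↔ γ ⟨e, hv⟩ = G.nbrIndex β v ⟨e, hv⟩ := by
  rw [consistentAt_iff hv]
  simp only [nbrIndex, update_self, update_of_ne (G.other_ne v e)]

theorem consistent_update_iff (β : G.Index m) (v : Fin d) (γ : G.LocalIndex m v) :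
    (∀ e, G.ConsistentAt (update β v γ) e) ↔ G.ConsistentAway β v ∧ γ = G.nbrIndex β v := by
  constructor
  · intro h
    exact ⟨fun e he => (consistentAt_update_of_not_inc he γ).1 (h e),
      funext fun e => (consistentAt_update_of_inc e.2 γ).1 (h e)⟩
  · rintro ⟨hβ, rfl⟩ e
    by_cases he : G.Inc v e
    · exact (consistentAt_update_of_inc he _).2 rfl
    · exact (consistentAt_update_of_not_inc he _).2 (hβ e he)

theorem consistent_iff (β : G.Index m) (v : Fin d) :
    (∀ e, G.ConsistentAt β e) ↔ G.ConsistentAway β v ∧ β v = G.nbrIndex β v := by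
  simpa using consistent_update_iff β v (β v)

theorem consistentAway_and_agree_iff {β : G.Index m} {v : Fin d} {e : E} (hv : G.Inc v e) :
    (G.ConsistentAway β v ∧ ∀ e' : {e' // G.Inc v e'}, e'.1 ≠ e → β v e' = G.nbrIndex β v e')
      ↔ ∀ e', e' ≠ e → G.ConsistentAt β e' := by
  constructor
  · rintro ⟨away, agree⟩ e' he'
    by_cases hve' : G.Inc v e'
    · exact (consistentAt_iff hve').2 (agree ⟨e', hve'⟩ he')
    · exact away e' hve'
  · intro h
    exact ⟨fun e' he' => h e' (by rintro rfl; exact he' hv),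
      fun e' he' => (consistentAt_iff e'.2).1 (h e'.1 he')⟩

variable [Fintype E] [DecidableEq E]

instance (β : G.Index m) (v : Fin d) : Decidable (G.ConsistentAway β v) := by
  unfold ConsistentAway; infer_instance

theorem graphTensor_eq (β : G.Index m) :
    graphTensor G m β = if ∀ e, G.ConsistentAt β e then 1 else 0 := by
  have prod_eq : ∀ j : ∀ e, Fin (m e), (∏ v : Fin d,
      (if β v = (fun e : {e : E // G.Inc v e} => j e.1) then (1 : ℂ) else 0))
      = if G.restrict j = β then 1 else 0 := by
    intro j
    rw [Finset.prod_boole]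
    simp only [Finset.mem_univ, true_implies, funext_iff (f := G.restrict j), eq_comm]
    rfl
  simp only [graphTensor, prod_eq]
  split_ifs with hβ
  · obtain ⟨j, rfl⟩ := exists_restrict_eq hβ
    simp [restrict_injective.eq_iff]
  · exact Finset.sum_eq_zero fun j _ =>
      if_neg fun (hj : G.restrict j = β) => hβ (hj ▸ consistentAt_restrict j)

theorem leibniz_graphTensor (X : ∀ v, G.LocalIndex m v → G.LocalIndex m v → ℂ)
    (β : G.Index m) :
    leibniz X (graphTensor G m) β
      = ∑ v, if G.ConsistentAway β v then X v (β v) (G.nbrIndex β v) else 0 := by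
  refine Finset.sum_congr rfl fun v _ => ?_
  simp only [graphTensor_eq, consistent_update_iff, mul_ite, mul_one, mul_zero]
  split_ifs with h <;> simp [h]

end Index

section Restrict

variable {G : GraphData d E} {m : E → ℕ}

variable (G) in
def extend (j : ∀ e, Fin (m e)) (v : Fin d) (α : G.LocalIndex m v) : ∀ e, Fin (m e) :=
  fun e => if h : G.Inc v e then α ⟨e, h⟩ else j e

theorem restrict_extend_self (j : ∀ e, Fin (m e)) (v : Fin d) (α : G.LocalIndex m v) :
    G.restrict (G.extend j v α) v = α :=
  funext fun e => dif_pos e.2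

theorem restrict_extend_of_ne {j : ∀ e, Fin (m e)} {v w : Fin d} {e : E} (hvw : v ≠ w)
    (hv : G.Inc v e) (hw : G.Inc w e) {α : G.LocalIndex m v} (hα : α ⟨e, hv⟩ = j e) :
    G.restrict (G.extend j v α) w = G.restrict j w := by
  funext ⟨e', hwe'⟩
  show dite _ _ _ = j e'
  split_ifs with hve'
  · obtain rfl := G.eq_of_inc hvw hv hw hve' hwe'
    exact hα
  · rfl

theorem exists_restrict_eq_pair (j₀ : ∀ e, Fin (m e)) {v w : Fin d} {e : E} (hvw : v ≠ w)
    (hv : G.Inc v e) (hw : G.Inc w e) (u : G.LocalIndex m v) (u' : G.LocalIndex m w)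
    (huu' : u ⟨e, hv⟩ = u' ⟨e, hw⟩) : ∃ j, G.restrict j v = u ∧ G.restrict j w = u' := by
  refine ⟨G.extend (G.extend j₀ w u') v u, restrict_extend_self _ _ _, ?_⟩
  rw [restrict_extend_of_ne hvw hv hw, restrict_extend_self]
  simpa [extend, hw] using huu'

theorem consistentAway_restrict (j : ∀ e, Fin (m e)) (v : Fin d) :
    G.ConsistentAway (G.restrict j) v :=
  fun e _ => consistentAt_restrict j e

theorem nbrIndex_restrict (j : ∀ e, Fin (m e)) (v : Fin d) :
    G.nbrIndex (G.restrict j) v = G.restrict j v :=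
  rfl

theorem consistentAway_update_restrict (j : ∀ e, Fin (m e)) (v : Fin d)
    (α : G.LocalIndex m v) : G.ConsistentAway (update (G.restrict j) v α) v :=
  fun e he => (consistentAt_update_of_not_inc he α).2 (consistentAt_restrict j e)

theorem nbrIndex_update (β : G.Index m) (v : Fin d) (α : G.LocalIndex m v) :
    G.nbrIndex (update β v α) v = G.nbrIndex β v :=
  funext fun _ => by simp only [nbrIndex, update_of_ne (G.other_ne _ _)]

theorem not_consistentAt_update_restrict {j : ∀ e, Fin (m e)} {v : Fin d} {e : E}
    (hv : G.Inc v e) {α : G.LocalIndex m v} (hα : α ⟨e, hv⟩ ≠ j e) :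
    ¬ G.ConsistentAt (update (G.restrict j) v α) e := by
  rwa [consistentAt_update_of_inc hv]

variable [DecidableEq E]

theorem restrict_update_of_not_inc {j : ∀ e, Fin (m e)} {e : E} (s : Fin (m e)) {v : Fin d}
    (hv : ¬ G.Inc v e) : G.restrict (update j e s) v = G.restrict j v :=
  funext fun e' => update_of_ne (by rintro h; exact hv (h ▸ e'.2)) _ _

theorem restrict_update_of_inc {j : ∀ e, Fin (m e)} {e : E} (s : Fin (m e)) {v : Fin d}
    (hv : G.Inc v e) : G.restrict (update j e s) v = update (G.restrict j v) ⟨e, hv⟩ s := by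
  funext e'
  by_cases h : e'.1 = e
  · obtain ⟨e', he'⟩ := e'
    subst h
    simp [restrict]
  · rw [update_of_ne (fun h' => h (congrArg Subtype.val h'))]
    exact update_of_ne h _ _

end Restrict

section Gauge

variable {G : GraphData d E} {m : E → ℕ}

variable (G) in
def gaugeEntry (Y : ∀ e, Fin (m e) → Fin (m e) → ℂ) (v : Fin d) (e : E) (s t : Fin (m e)) : ℂ :=
  if v = (G.ends e).1 then Y e s t else -Y e t s

/-- The ends `a`, `b` of `e` contribute `Y_e(β_a, β_b)` and `-Y_e(β_a, β_b)`. -/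
theorem sum_gaugeEntry_nbrIndex (Y : ∀ e, Fin (m e) → Fin (m e) → ℂ) (β : G.Index m) (e : E) :
    ∑ v, (if h : G.Inc v e then
      G.gaugeEntry Y v e (β v ⟨e, h⟩) (G.nbrIndex β v ⟨e, h⟩) else 0) = 0 := by
  rw [Fintype.sum_eq_add _ _ (G.no_loops e), dif_pos (G.inc_fst e), dif_pos (G.inc_snd e)]
  · rw [nbrIndex_eq β (G.inc_fst e) (G.inc_snd e) (G.no_loops e).symm,
      nbrIndex_eq β (G.inc_snd e) (G.inc_fst e) (G.no_loops e)]
    simp only [gaugeEntry, if_pos, if_neg (G.no_loops e).symm, add_neg_cancel]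
  · rintro v ⟨h₁, h₂⟩
    exact dif_neg (by rintro (h | h) <;> contradiction)

variable [Fintype E] [DecidableEq E]

variable (G) in
/-- The matrix at `v` of `∑ₑ g_e(Y_e)`. -/
def gaugeMatrix (Y : ∀ e, Fin (m e) → Fin (m e) → ℂ) (v : Fin d) (β γ : G.LocalIndex m v) : ℂ :=
  ∑ e : E, if h : G.Inc v e then
      G.gaugeEntry Y v e (β ⟨e, h⟩) (γ ⟨e, h⟩) *
        ∏ e' : {e' : E // G.Inc v e'}, (if e'.1 = e then (1 : ℂ) else if β e' = γ e' then 1 else 0)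
    else 0

theorem prod_ite_agree {v : Fin d} (β γ : G.LocalIndex m v) (e : E) :
    ∏ e' : {e' : E // G.Inc v e'}, (if e'.1 = e then (1 : ℂ) else if β e' = γ e' then 1 else 0)
      = if ∀ e' : {e' : E // G.Inc v e'}, e'.1 ≠ e → β e' = γ e' then 1 else 0 := by
  have factor : ∀ e' : {e' : E // G.Inc v e'},
      (if e'.1 = e then (1 : ℂ) else if β e' = γ e' then 1 else 0)
        = if e'.1 = e ∨ β e' = γ e' then 1 else 0 := fun e' => by
    by_cases h : e'.1 = e <;> simp [h]
  simp only [factor, Finset.prod_boole, Finset.mem_univ, true_implies, or_iff_not_imp_left, ne_eq]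

theorem gaugeMatrix_eq_sum_subtype (Y : ∀ e, Fin (m e) → Fin (m e) → ℂ) {v : Fin d}
    (β γ : G.LocalIndex m v) :
    G.gaugeMatrix Y v β γ = ∑ e : {e // G.Inc v e},
      if ∀ e' : {e' // G.Inc v e'}, e'.1 ≠ e.1 → β e' = γ e' then
        G.gaugeEntry Y v e (β e) (γ e) else 0 := by
  rw [gaugeMatrix, Fintype.sum_dite_eq_sum_subtype]
  simp only [prod_ite_agree, mul_ite, mul_one, mul_zero]

theorem sum_ite_consistentAway_gaugeMatrix (Y : ∀ e, Fin (m e) → Fin (m e) → ℂ)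
    (β : G.Index m) :
    ∑ v, (if G.ConsistentAway β v then G.gaugeMatrix Y v (β v) (G.nbrIndex β v) else 0) = 0 := by
  calc _ = ∑ v, ∑ e, (if h : G.Inc v e then
        (if ∀ e', e' ≠ e → G.ConsistentAt β e' then
          G.gaugeEntry Y v e (β v ⟨e, h⟩) (G.nbrIndex β v ⟨e, h⟩) else 0) else 0) := by
        refine Finset.sum_congr rfl fun v _ => ?_
        by_cases away : G.ConsistentAway β v
        · rw [if_pos away, gaugeMatrix]
          refine Finset.sum_congr rfl fun e _ => dite_congr rfl (fun h => ?_) fun _ => rfl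
          rw [prod_ite_agree, mul_ite, mul_one, mul_zero]
          exact if_congr ((and_iff_right away).symm.trans (consistentAway_and_agree_iff h)) rfl rfl
        · rw [if_neg away]
          exact (Finset.sum_eq_zero fun e _ => dite_eq_right_iff.2 fun h =>
            if_neg fun hC => away ((consistentAway_and_agree_iff h).2 hC).1).symm
    _ = ∑ e, ∑ v, (if h : G.Inc v e then
        (if ∀ e', e' ≠ e → G.ConsistentAt β e' then
          G.gaugeEntry Y v e (β v ⟨e, h⟩) (G.nbrIndex β v ⟨e, h⟩) else 0) else 0) :=
        Finset.sum_comm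
    _ = 0 := Finset.sum_eq_zero fun e _ => by
        by_cases hC : ∀ e', e' ≠ e → G.ConsistentAt β e'
        · simpa only [if_pos hC] using sum_gaugeEntry_nbrIndex Y β e
        · simp [hC]

theorem leibniz_graphTensor_eq_zero_of_eq_gaugeMatrix_add (Y : ∀ e, Fin (m e) → Fin (m e) → ℂ)
    (x : Fin d → ℂ) (hx : ∑ v, x v = 0) {X : ∀ v, G.LocalIndex m v → G.LocalIndex m v → ℂ}
    (hX : ∀ v β γ, X v β γ = G.gaugeMatrix Y v β γ + x v * if β = γ then 1 else 0)
    (β : G.Index m) : leibniz X (graphTensor G m) β = 0 := by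
  have scalar : ∀ v, (if G.ConsistentAway β v then
      x v * (if β v = G.nbrIndex β v then 1 else 0) else 0)
      = x v * if ∀ e, G.ConsistentAt β e then 1 else 0 := fun v => by
    by_cases away : G.ConsistentAway β v <;> by_cases agree : β v = G.nbrIndex β v <;>
      simp [away, agree, consistent_iff β v]
  rw [leibniz_graphTensor]
  simp only [hX, ite_add_zero]
  rw [Finset.sum_add_distrib, sum_ite_consistentAway_gaugeMatrix, Finset.sum_congr rfl
    fun v _ => scalar v, ← Finset.sum_mul, hx, zero_mul, add_zero]

variable (G) in
def scalarPart (X : ∀ v, G.LocalIndex m v → G.LocalIndex m v → ℂ) (j₀ : ∀ e, Fin (m e))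
    (v : Fin d) : ℂ :=
  X v (G.restrict j₀ v) (G.restrict j₀ v)

variable (G) in
/-- `Y_e` is read off at the first endpoint of `e`, around the base index `j₀`. -/
def gaugePart (X : ∀ v, G.LocalIndex m v → G.LocalIndex m v → ℂ) (j₀ : ∀ e, Fin (m e)) (e : E)
    (s t : Fin (m e)) : ℂ :=
  X (G.ends e).1 (update (G.restrict j₀ (G.ends e).1) ⟨e, G.inc_fst e⟩ s)
      (update (G.restrict j₀ (G.ends e).1) ⟨e, G.inc_fst e⟩ t)
    - if s = t then G.scalarPart X j₀ (G.ends e).1 else 0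

end Gauge

section Annihilator

variable {G : GraphData d E} {m : E → ℕ} [Fintype E] [DecidableEq E]
  {X : ∀ v, G.LocalIndex m v → G.LocalIndex m v → ℂ}
  (hX : ∀ β, leibniz X (graphTensor G m) β = 0)
include hX

theorem sum_diag_restrict_eq_zero (j : ∀ e, Fin (m e)) :
    ∑ v, X v (G.restrict j v) (G.restrict j v) = 0 := by
  simpa [leibniz_graphTensor, consistentAway_restrict, nbrIndex_restrict] using hX (G.restrict j)

/-- `(X.T)(β) = 0` at `β = restrict j` with the index at `v` of the edge `e` changed to `s`. -/
theorem apply_restrict_update_add_eq_zero {v w : Fin d} {e : E} (hvw : v ≠ w)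
    (hv : G.Inc v e) (hw : G.Inc w e) (j : ∀ e, Fin (m e)) {s : Fin (m e)} (hs : s ≠ j e) :
    X v (G.restrict (update j e s) v) (G.restrict j v)
      + X w (G.restrict j w) (G.restrict (update j e s) w) = 0 := by
  set j' := update j e s
  have two_views : update (G.restrict j) v (G.restrict j' v)
      = update (G.restrict j') w (G.restrict j w) := by
    funext x
    by_cases hxv : x = v
    · subst hxv; simp [hvw]
    by_cases hxw : x = w
    · subst hxw; simp [hxv]
    rw [update_of_ne hxv, update_of_ne hxw,
      restrict_update_of_not_inc s (not_inc_of_ne hvw hv hw hxv hxw)]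
  have h := hX (update (G.restrict j) v (G.restrict j' v))
  rw [leibniz_graphTensor, Fintype.sum_eq_add v w hvw] at h
  · rwa [if_pos (consistentAway_update_restrict _ _ _), nbrIndex_update, nbrIndex_restrict,
      update_self, two_views, if_pos (consistentAway_update_restrict _ _ _), nbrIndex_update,
      nbrIndex_restrict, update_self] at h
  · rintro x ⟨hxv, hxw⟩
    refine if_neg fun hx => not_consistentAt_update_restrict hv ?_
      (hx e (not_inc_of_ne hvw hv hw hxv hxw))
    rwa [restrict_update_of_inc s hv, update_self]

theorem eq_zero_of_two_ne (j₀ : ∀ e, Fin (m e)) {v : Fin d} {α γ : G.LocalIndex m v}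
    {e₁ e₂ : {e // G.Inc v e}} (h₁₂ : e₁ ≠ e₂) (h₁ : α e₁ ≠ γ e₁) (h₂ : α e₂ ≠ γ e₂) :
    X v α γ = 0 := by
  set j := G.extend j₀ v γ
  have mismatch : ∀ e : {e // G.Inc v e}, α e ≠ γ e →
      ¬ G.ConsistentAt (update (G.restrict j) v α) e.1 := fun e he =>
    not_consistentAt_update_restrict e.2 (by simpa [j, extend, e.2] using he)
  have h := hX (update (G.restrict j) v α)
  rw [leibniz_graphTensor, Fintype.sum_eq_single v, if_pos (consistentAway_update_restrict _ _ _),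
    nbrIndex_update, nbrIndex_restrict, update_self, restrict_extend_self] at h
  · exact h
  · intro u huv
    refine if_neg fun hu => ?_
    by_cases h₁u : G.Inc u e₁
    · have h₂u : ¬ G.Inc u e₂ := fun h₂u =>
        h₁₂ (Subtype.ext (G.eq_of_inc (Ne.symm huv) e₁.2 h₁u e₂.2 h₂u))
      exact mismatch e₂ h₂ (hu e₂ h₂u)
    · exact mismatch e₁ h₁ (hu e₁ h₁u)

theorem offDiag_add_offDiag_eq_zero (j₀ : ∀ e, Fin (m e)) {v w : Fin d} {e : E} (hvw : v ≠ w)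
    (hv : G.Inc v e) (hw : G.Inc w e) (u : G.LocalIndex m v) (u' : G.LocalIndex m w)
    {s t : Fin (m e)} (hst : s ≠ t) :
    X v (update u ⟨e, hv⟩ s) (update u ⟨e, hv⟩ t)
      + X w (update u' ⟨e, hw⟩ t) (update u' ⟨e, hw⟩ s) = 0 := by
  obtain ⟨j, hjv, hjw⟩ := exists_restrict_eq_pair j₀ hvw hv hw
    (update u ⟨e, hv⟩ t) (update u' ⟨e, hw⟩ t) (by simp)
  have hje : j e = t := by simpa [restrict] using congrFun hjv ⟨e, hv⟩
  have h := apply_restrict_update_add_eq_zero hX hvw hv hw j (hje ▸ hst)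
  rwa [restrict_update_of_inc s hv, restrict_update_of_inc s hw, hjv, hjw, update_idem,
    update_idem] at h

theorem diag_update_sub_add_eq_zero (j₀ : ∀ e, Fin (m e)) {v w : Fin d} {e : E} (hvw : v ≠ w)
    (hv : G.Inc v e) (hw : G.Inc w e) (u : G.LocalIndex m v) (u' : G.LocalIndex m w)
    (huu' : u ⟨e, hv⟩ = u' ⟨e, hw⟩) (s : Fin (m e)) :
    X v (update u ⟨e, hv⟩ s) (update u ⟨e, hv⟩ s) - X v u u
      + (X w (update u' ⟨e, hw⟩ s) (update u' ⟨e, hw⟩ s) - X w u' u') = 0 := by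
  obtain ⟨j, hjv, hjw⟩ := exists_restrict_eq_pair j₀ hvw hv hw u u' huu'
  have h := sub_eq_zero_of_eq ((sum_diag_restrict_eq_zero hX (update j e s)).trans
    (sum_diag_restrict_eq_zero hX j).symm)
  rw [← Finset.sum_sub_distrib, Fintype.sum_eq_add v w hvw] at h
  · rwa [restrict_update_of_inc s hv, restrict_update_of_inc s hw, hjv, hjw] at h
  · rintro x ⟨hxv, hxw⟩
    rw [restrict_update_of_not_inc s (not_inc_of_ne hvw hv hw hxv hxw), sub_self]

variable (j₀ : ∀ e, Fin (m e))

theorem offDiag_eq_gaugeEntry {v : Fin d} {e : E} (hv : G.Inc v e) (u : G.LocalIndex m v)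
    {s t : Fin (m e)} (hst : s ≠ t) :
    X v (update u ⟨e, hv⟩ s) (update u ⟨e, hv⟩ t) = G.gaugeEntry (G.gaugePart X j₀) v e s t := by
  have offDiag_add := offDiag_add_offDiag_eq_zero hX j₀ (G.no_loops e) (G.inc_fst e) (G.inc_snd e)
  rcases hv with rfl | rfl
  · have h₁ := offDiag_add u (G.restrict j₀ _) hst
    have h₂ := offDiag_add (G.restrict j₀ _) (G.restrict j₀ _) hst
    rw [gaugeEntry, if_pos rfl, gaugePart, if_neg hst, sub_zero]
    linear_combination h₁ - h₂
  · have h := offDiag_add (G.restrict j₀ _) u hst.symm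
    rw [gaugeEntry, if_neg (G.no_loops e).symm, gaugePart, if_neg hst.symm, sub_zero]
    linear_combination h

theorem diag_sub_scalarPart_eq_gaugeEntry {v : Fin d} {e : E} (hv : G.Inc v e) (s : Fin (m e)) :
    X v (update (G.restrict j₀ v) ⟨e, hv⟩ s) (update (G.restrict j₀ v) ⟨e, hv⟩ s)
      - G.scalarPart X j₀ v = G.gaugeEntry (G.gaugePart X j₀) v e s s := by
  rcases hv with rfl | rfl
  · rw [gaugeEntry, if_pos rfl, gaugePart, if_pos rfl]
  · have h := diag_update_sub_add_eq_zero hX j₀ (G.no_loops e) (G.inc_fst e) (G.inc_snd e)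
      (G.restrict j₀ _) (G.restrict j₀ _) rfl s
    rw [gaugeEntry, if_neg (G.no_loops e).symm, gaugePart, if_pos rfl, scalarPart, scalarPart]
    linear_combination h

theorem diag_eq_scalarPart_add_sum (v : Fin d) (u : G.LocalIndex m v) :
    X v u u = G.scalarPart X j₀ v + ∑ e, (X v (update (G.restrict j₀ v) e (u e))
      (update (G.restrict j₀ v) e (u e)) - G.scalarPart X j₀ v) := by
  refine eq_add_sum_update_sub (fun u => X v u u) (G.restrict j₀ v) (fun u e s => ?_) u
  set u' := update (G.restrict j₀ (G.other v e.1)) ⟨e.1, G.inc_other v e.1⟩ (u e)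
  have diag_add := fun u₁ h => diag_update_sub_add_eq_zero hX j₀ (G.other_ne v e.1).symm e.2
    (G.inc_other v e.1) u₁ u' h s
  have h₁ := diag_add u (by simp [u'])
  have h₂ := diag_add (update (G.restrict j₀ v) e (u e)) (by simp [u'])
  rw [update_idem] at h₂
  linear_combination h₁ - h₂

theorem eq_gaugeMatrix_add (v : Fin d) (β γ : G.LocalIndex m v) :
    X v β γ = G.gaugeMatrix (G.gaugePart X j₀) v β γ
      + G.scalarPart X j₀ v * if β = γ then 1 else 0 := by
  rw [gaugeMatrix_eq_sum_subtype]
  by_cases hβγ : β = γ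
  · subst hβγ
    simp only [implies_true, if_true, mul_one]
    rw [diag_eq_scalarPart_add_sum hX j₀ v β, add_comm]
    exact congrArg (· + _) (Finset.sum_congr rfl fun e _ =>
      diag_sub_scalarPart_eq_gaugeEntry hX j₀ e.2 (β e))
  rw [if_neg hβγ, mul_zero, add_zero]
  obtain ⟨e₀, h₀⟩ : ∃ e, β e ≠ γ e := by
    by_contra! h
    exact hβγ (funext h)
  by_cases two : ∃ e₁, e₁ ≠ e₀ ∧ β e₁ ≠ γ e₁
  · obtain ⟨e₁, h₁₀, h₁⟩ := two
    rw [eq_zero_of_two_ne hX j₀ h₁₀ h₁ h₀]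
    refine (Finset.sum_eq_zero fun e _ => if_neg fun agree => ?_).symm
    by_cases he : e₀ = e
    · subst he
      exact h₁ (agree e₁ fun h => h₁₀ (Subtype.ext h))
    · exact h₀ (agree e₀ fun h => he (Subtype.ext h))
  push Not at two
  have hγ : update β e₀ (γ e₀) = γ := by
    funext e
    by_cases he : e = e₀
    · subst he
      exact update_self _ _ _
    · rw [update_of_ne he]
      exact two e he
  rw [Fintype.sum_eq_single e₀ fun e he => if_neg fun agree =>
      h₀ (agree e₀ fun h => he (Subtype.ext h).symm),
    if_pos fun e h => two e fun h' => h (congrArg Subtype.val h')]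
  calc X v β γ = X v (update β e₀ (β e₀)) (update β e₀ (γ e₀)) := by rw [update_eq_self, hγ]
    _ = _ := offDiag_eq_gaugeEntry hX j₀ e₀.2 β h₀

end Annihilator

end GraphData

/-- Endomorphisms of `W_v` are matrices in the product basis of `W_v`; `g_e(Y)` acts by `Y` at
`(G.ends e).1` and by `-Yᵀ` at `(G.ends e).2`. -/
theorem ann_graphTensor {d : ℕ} {E : Type} [Fintype E] [DecidableEq E]
    (G : GraphData d E) (m : E → ℕ) (hm : ∀ e, 1 ≤ m e) :
    { X : ∀ v : Fin d, ((∀ e : {e : E // G.Inc v e}, Fin (m e.1)) →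
        (∀ e : {e : E // G.Inc v e}, Fin (m e.1)) → ℂ) |
      ∀ β : (∀ v : Fin d, (∀ e : {e : E // G.Inc v e}, Fin (m e.1))),
        (∑ v : Fin d, ∑ γ : (∀ e : {e : E // G.Inc v e}, Fin (m e.1)),
          X v (β v) γ * graphTensor G m (Function.update β v γ)) = 0 }
    = { X | ∃ (Y : ∀ e : E, Fin (m e) → Fin (m e) → ℂ) (x : Fin d → ℂ),
        (∑ v : Fin d, x v) = 0 ∧
        ∀ v β γ, X v β γ =
          (∑ e : E,
            if h : G.Inc v e then
              (if v = (G.ends e).1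
                then Y e (β ⟨e, h⟩) (γ ⟨e, h⟩)
                else -(Y e (γ ⟨e, h⟩) (β ⟨e, h⟩))) *
              ∏ e' : {e' : E // G.Inc v e'},
                (if e'.1 = e then (1 : ℂ) else if β e' = γ e' then 1 else 0)
            else 0)
          + x v * (if β = γ then 1 else 0) } := by
  ext X
  constructor
  · intro hX
    let j₀ : ∀ e, Fin (m e) := fun e => ⟨0, hm e⟩
    exact ⟨G.gaugePart X j₀, G.scalarPart X j₀, GraphData.sum_diag_restrict_eq_zero hX j₀,
      GraphData.eq_gaugeMatrix_add hX j₀⟩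
  · rintro ⟨Y, x, hx, hX⟩ β
    exact GraphData.leibniz_graphTensor_eq_zero_of_eq_gaugeMatrix_add Y x hx hX β
end

section
/- Let 1 ≤ k ≤ d, let U_1,…,U_k be nonzero finite-dimensional complex vector spaces, let W′_1,…,W′_d be finite-dimensional complex vector spaces, and let T′ ∈ W′_1⊗⋯⊗W′_d be a nonzero concise tensor. Set V_0 = U_1*⊗⋯⊗U_k*, V_j = U_j⊗W′_j for 1 ≤ j ≤ k, and V_j = W′_j for k < j ≤ d. Let T ∈ V_0⊗V_1⊗⋯⊗V_d be the Kronecker product of the star graph tensor with T′, i.e. the image of T′ under the linear map sending w_1⊗⋯⊗w_d to Σ_{i_1,…,i_k} (e*_{i_1}⊗⋯⊗e*_{i_k}) ⊗ (e_{i_1}⊗w_1) ⊗ ⋯ ⊗ (e_{i_k}⊗w_k) ⊗ w_{k+1} ⊗ ⋯ ⊗ w_d, where (e_i) runs over a basis of each U_j and (e*_i) is the dual basis. Then the annihilator of T under the Leibniz action in End(V_0)⊕End(V_1)⊕⋯⊕End(V_d) equals the sum of: (a) the tuples (0, Id_{U_1}⊗Θ_1, …, Id_{U_k}⊗Θ_k,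 Θ_{k+1}, …, Θ_d) with (Θ_1,…,Θ_d) ∈ ann(T′), and (b) for each j ∈ {1,…,k}, the tuples whose 0-component acts as −Yᵀ on the factor U_j* of V_0 and as the identity on the other factors, whose j-component is Y⊗Id_{W′_j}, and whose other components are 0, with Y ∈ End(U_j). -/
open scoped BigOperators

/-- Conciseness of a tensor in coordinates: every functional killed by the `i`-th
flattening is zero. -/
def Concise {d : ℕ} {b : Fin d → ℕ} (T : (∀ j : Fin d, Fin (b j)) → ℂ) : Prop :=
  ∀ (i : Fin d) (c : Fin (b i) → ℂ),
    (∀ β : ∀ j : Fin d, Fin (b j),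
      (∑ p : Fin (b i), c p * T (Function.update β i p)) = 0) → c = 0

/-- The Kronecker product of the star graph tensor with a tensor `T′`, in coordinates:
the 0-th factor is `U_1*⊗⋯⊗U_k*` (realized as `⨂_j U_j*` with `U_j = ℂ^1` for `j ≥ k`)
and the `j`-th factor is `V_j = U_j ⊗ W′_j`. -/
noncomputable def starKron {d : ℕ} (a b : Fin d → ℕ)
    (T' : (∀ j : Fin d, Fin (b j)) → ℂ) :
    ((∀ j : Fin d, Fin (a j)) × (∀ j : Fin d, Fin (a j) × Fin (b j))) → ℂ :=
  fun β =>
    (∏ j : Fin d, if (β.2 j).1 = β.1 j then (1 : ℂ) else 0) * T' fun j => (β.2 j).2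

/-!
In coordinates the star factor is a product of Kronecker deltas, so the annihilator equation at
`(β₀, β)`, `β j = (βa j, βw j)`, only sees the entries of `Z.1` between index tuples differing in at most one slot and
the blocks of `Z.2 j`. Subtracting the equation at a base point `γ` from the one at `γ` updated
in slot `j`, conciseness of `T'` in slot `j` forces each block `Z.2 j (r, ·) (p, ·)` to be
`δ_{rp}` times the block at `(γ j, γ j)` plus a multiple of the identity: `Z.2 j` is a Kronecker
sum `Y j ⊗ 1 + 1 ⊗ Θ j`. For such `Z` the equation becomes
`(Z.1 β₀ βa - dualGauge Y β₀ βa) * T' βw + [βa = β₀] * (Θ.T') βw = 0`, and since `T' ≠ 0` this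
says exactly `Θ ∈ ann T'` and `Z.1 = dualGauge Y`. The only freedom is a scalar moving between
`Θ` and `Y`; putting it into slot `0 < k` makes `Y` vanish on the slots with `a j = 1`.
-/

open Function Finset

section Indicator

variable {R ι : Type*} [CommMonoidWithZero R] [Fintype ι] {α : ι → Type*}
  [∀ i, DecidableEq (α i)]

lemma prod_ite_eq_pi (f g : ∀ i, α i) :
    (∏ i, if f i = g i then (1 : R) else 0) = if f = g then 1 else 0 := by
  simp only [Fintype.prod_boole, funext_iff]

lemma prod_ite_eq_update [DecidableEq ι] (f g : ∀ i, α i) (j : ι) :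
    (∏ i, if i = j then (1 : R) else if f i = g i then 1 else 0)
      = if update g j (f j) = f then 1 else 0 := by
  have : ∀ i, (if i = j then (1 : R) else if f i = g i then 1 else 0)
      = if i = j ∨ f i = g i then 1 else 0 := fun i => by
    by_cases hi : i = j <;> simp [hi]
  simp only [this, Fintype.prod_boole, update_eq_iff, true_and]
  congr 1
  refine propext ⟨fun h i hi => ((h i).resolve_left hi).symm, fun h i => ?_⟩
  exact or_iff_not_imp_left.2 fun hi => (h i hi).symm

end Indicator

lemma update_pair {ι : Type*} [DecidableEq ι] {α β : ι → Type*} (f : ∀ i, α i) (g : ∀ i, β i)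
    (j : ι) (p : α j) (q : β j) :
    update (fun i => (f i, g i)) j (p, q) = fun i => (update f j p i, update g j q i) := by
  funext i
  exact (apply_update₂ (fun _ => Prod.mk) f g j p q i).symm

/-- `Y ⊗ 1 + 1 ⊗ Θ` on `A × B`. -/
def kronSum {A B : Type*} [DecidableEq A] [DecidableEq B] (Y : A → A → ℂ) (Θ : B → B → ℂ) :
    A × B → A × B → ℂ :=
  fun p q => (if p.1 = q.1 then Θ p.2 q.2 else 0) + Y p.1 q.1 * if p.2 = q.2 then 1 else 0

section StarKron

variable {d : ℕ} {a b : Fin d → ℕ}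

def leibnizAct (T' : (∀ j : Fin d, Fin (b j)) → ℂ) (Θ : ∀ j : Fin d, Fin (b j) → Fin (b j) → ℂ)
    (β : ∀ j : Fin d, Fin (b j)) : ℂ :=
  ∑ j : Fin d, ∑ q : Fin (b j), Θ j (β j) q * T' (update β j q)

variable (a b) in
noncomputable def starKronAct (T' : (∀ j : Fin d, Fin (b j)) → ℂ)
    (Z : ((∀ j : Fin d, Fin (a j)) → (∀ j : Fin d, Fin (a j)) → ℂ) ×
      (∀ j : Fin d, (Fin (a j) × Fin (b j)) → (Fin (a j) × Fin (b j)) → ℂ))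
    (β₀ : ∀ j : Fin d, Fin (a j)) (β : ∀ j : Fin d, Fin (a j) × Fin (b j)) : ℂ :=
  (∑ γ₀ : (∀ j : Fin d, Fin (a j)), Z.1 β₀ γ₀ * starKron a b T' (γ₀, β)) +
    ∑ j : Fin d, ∑ γ : Fin (a j) × Fin (b j),
      Z.2 j (β j) γ * starKron a b T' (β₀, update β j γ)

/-- `∑ j, -(Y j)ᵀ` acting on the `j`-th factor of `V_0 = ⨂ j, U_j*`. -/
def dualGauge (Y : ∀ j : Fin d, Fin (a j) → Fin (a j) → ℂ) (β₀ γ₀ : ∀ j : Fin d, Fin (a j)) : ℂ :=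
  ∑ j : Fin d, -(Y j (γ₀ j) (β₀ j)) *
    ∏ j' : Fin d, (if j' = j then (1 : ℂ) else if β₀ j' = γ₀ j' then 1 else 0)

variable {T' : (∀ j : Fin d, Fin (b j)) → ℂ}
  {Z : ((∀ j : Fin d, Fin (a j)) → (∀ j : Fin d, Fin (a j)) → ℂ) ×
    (∀ j : Fin d, (Fin (a j) × Fin (b j)) → (Fin (a j) × Fin (b j)) → ℂ)}

lemma starKron_mk (γ₀ βa : ∀ j : Fin d, Fin (a j))
    (βw : ∀ j : Fin d, Fin (b j)) :
    starKron a b T' (γ₀, fun j => (βa j, βw j)) = if βa = γ₀ then T' βw else 0 := by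
  simp only [starKron, prod_ite_eq_pi, ite_mul, one_mul, zero_mul]

lemma starKronAct_mk (β₀ βa : ∀ j : Fin d, Fin (a j))
    (βw : ∀ j : Fin d, Fin (b j)) :
    starKronAct a b T' Z β₀ (fun j => (βa j, βw j)) = Z.1 β₀ βa * T' βw +
      ∑ j : Fin d, if update βa j (β₀ j) = β₀ then
        ∑ q : Fin (b j), Z.2 j (βa j, βw j) (β₀ j, q) * T' (update βw j q) else 0 := by
  simp only [starKronAct, starKron_mk, Fintype.sum_prod_type, update_pair, mul_ite, mul_zero,
    sum_ite_eq, mem_univ, if_true]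
  congr 1
  refine sum_congr rfl fun j _ => ?_
  rw [sum_eq_single (β₀ j)]
  · split_ifs <;> simp
  · intro p _ hp
    refine sum_eq_zero fun q _ => if_neg fun h => hp ?_
    simpa using congrFun h j
  · simp

lemma leibnizAct_sub_leibnizAct {Θ₁ Θ₂ : ∀ j : Fin d, Fin (b j) → Fin (b j) → ℂ} {j : Fin d}
    (h : ∀ i ≠ j, Θ₁ i = Θ₂ i) (β : ∀ j : Fin d, Fin (b j)) :
    leibnizAct T' Θ₁ β - leibnizAct T' Θ₂ β
      = ∑ q : Fin (b j), (Θ₁ j (β j) q - Θ₂ j (β j) q) * T' (update β j q) := by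
  rw [leibnizAct, leibnizAct, ← sum_sub_distrib, sum_eq_single j]
  · simp only [← sum_sub_distrib, sub_mul]
  · intro i _ hi
    simp [h i hi]
  · simp

lemma Concise.apply_eq_of_contract (hT' : Concise T') {i : Fin d} {c : Fin (b i) → ℂ} {μ : ℂ}
    {s : Fin (b i)} (h : ∀ β, μ * T' (update β i s) + ∑ p, c p * T' (update β i p) = 0)
    (q : Fin (b i)) : c q = -μ * if s = q then 1 else 0 := by
  have hc := hT' i (fun p => c p + μ * if s = p then 1 else 0) fun β => by
    simp only [add_mul, sum_add_distrib, mul_assoc, ite_mul, one_mul, zero_mul, ← mul_sum,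
      sum_ite_eq, mem_univ, if_true]
    linear_combination h β
  have hq : c q + μ * (if s = q then 1 else 0) = 0 := congrFun hc q
  linear_combination hq

lemma starKronAct_of_kronSum {Θ : ∀ j : Fin d, Fin (b j) → Fin (b j) → ℂ}
    {Y : ∀ j : Fin d, Fin (a j) → Fin (a j) → ℂ}
    (hZ : ∀ j p q, Z.2 j p q = kronSum (Y j) (Θ j) p q) (β₀ βa : ∀ j : Fin d, Fin (a j))
    (βw : ∀ j : Fin d, Fin (b j)) :
    starKronAct a b T' Z β₀ (fun j => (βa j, βw j))
      = (Z.1 β₀ βa - dualGauge Y β₀ βa) * T' βw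
        + if βa = β₀ then leibnizAct T' Θ βw else 0 := by
  have hslot : ∀ j, (if update βa j (β₀ j) = β₀ then
        ∑ q : Fin (b j), Z.2 j (βa j, βw j) (β₀ j, q) * T' (update βw j q) else 0)
      = (if βa = β₀ then ∑ q : Fin (b j), Θ j (βw j) q * T' (update βw j q) else 0)
        + Y j (βa j) (β₀ j) * (if update βa j (β₀ j) = β₀ then 1 else 0) * T' βw := by
    intro j
    have hA : βa = β₀ ↔ βa j = β₀ j ∧ update βa j (β₀ j) = β₀ := by
      constructor
      · rintro rfl; simp
      · rintro ⟨h, hu⟩; rwa [← h, update_eq_self] at hu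
    simp only [hZ, kronSum, add_mul, sum_add_distrib, ite_mul, one_mul, zero_mul, mul_assoc]
    split_ifs <;> simp_all
  rw [starKronAct_mk, sum_congr rfl fun j _ => hslot j, sum_add_distrib, dualGauge, leibnizAct]
  simp only [prod_ite_eq_update, sum_ite_irrel, sum_const_zero, ← sum_mul, neg_mul, sum_neg_distrib]
  ring

section Annihilator

variable (hZ : ∀ β₀ β, starKronAct a b T' Z β₀ β = 0)
include hZ

lemma starKronAct_diag (γ : ∀ j : Fin d, Fin (a j)) (β : ∀ j : Fin d, Fin (b j)) :
    Z.1 γ γ * T' β + leibnizAct T' (fun j s q => Z.2 j (γ j, s) (γ j, q)) β = 0 := by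
  simpa [starKronAct_mk, leibnizAct] using hZ γ fun j => (γ j, β j)

lemma starKronAct_offDiag (γ : ∀ j : Fin d, Fin (a j)) {j : Fin d} {p : Fin (a j)} (hp : p ≠ γ j)
    (β : ∀ j : Fin d, Fin (b j)) :
    Z.1 (update γ j p) γ * T' β
      + ∑ q : Fin (b j), Z.2 j (γ j, β j) (p, q) * T' (update β j q) = 0 := by
  have h := hZ (update γ j p) fun j => (γ j, β j)
  rwa [starKronAct_mk, sum_eq_single j, update_self, if_pos rfl] at h
  · intro i _ hi
    refine if_neg fun h => hp ?_
    simpa [update_of_ne (Ne.symm hi)] using (congrFun h j).symm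
  · simp

lemma starKronAct_slot (γ : ∀ j : Fin d, Fin (a j)) (j : Fin d) (r p : Fin (a j))
    (β : ∀ j : Fin d, Fin (b j)) :
    (Z.1 (update γ j p) (update γ j r) - if r = p then Z.1 γ γ else 0) * T' β
      + ∑ q : Fin (b j), (Z.2 j (r, β j) (p, q) - if r = p then Z.2 j (γ j, β j) (γ j, q) else 0)
        * T' (update β j q) = 0 := by
  by_cases hrp : r = p
  · subst hrp
    have h := leibnizAct_sub_leibnizAct (T' := T') (j := j)
      (Θ₁ := fun i s q => Z.2 i (update γ j r i, s) (update γ j r i, q))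
      (Θ₂ := fun i s q => Z.2 i (γ i, s) (γ i, q)) (fun i hi => by simp [update_of_ne hi]) β
    simp only [update_self, if_true] at h ⊢
    linear_combination starKronAct_diag hZ (update γ j r) β - starKronAct_diag hZ γ β - h
  · simp only [if_neg hrp, sub_zero]
    simpa using starKronAct_offDiag hZ (update γ j r) (p := p) (by simpa using Ne.symm hrp) β

lemma starKronAct_block (hT' : Concise T') (γ : ∀ j : Fin d, Fin (a j)) (j : Fin d)
    (r p : Fin (a j)) (s q : Fin (b j)) :
    Z.2 j (r, s) (p, q) = (if r = p then Z.2 j (γ j, s) (γ j, q) else 0)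
      - (Z.1 (update γ j p) (update γ j r) - if r = p then Z.1 γ γ else 0)
        * if s = q then 1 else 0 := by
  have h := hT'.apply_eq_of_contract
    (c := fun q => Z.2 j (r, s) (p, q) - if r = p then Z.2 j (γ j, s) (γ j, q) else 0)
    (fun β => by simpa using starKronAct_slot hZ γ j r p (update β j s)) q
  linear_combination h

theorem exists_kronSum_of_starKronAct_eq_zero (hT'0 : T' ≠ 0) (hT' : Concise T')
    (γ : ∀ j : Fin d, Fin (a j)) (j₀ : Fin d) :
    ∃ (Θ : ∀ j : Fin d, Fin (b j) → Fin (b j) → ℂ) (Y : ∀ j : Fin d, Fin (a j) → Fin (a j) → ℂ),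
      (∀ β, leibnizAct T' Θ β = 0) ∧ (∀ j ≠ j₀, Y j (γ j) (γ j) = 0) ∧
      (∀ β₀ γ₀, Z.1 β₀ γ₀ = dualGauge Y β₀ γ₀) ∧
      ∀ j p q, Z.2 j p q = kronSum (Y j) (Θ j) p q := by
  obtain ⟨βs, hβs⟩ : ∃ β, T' β ≠ 0 := Function.ne_iff.1 hT'0
  -- `Z.1 γ γ` is the scalar that can be traded between `Θ` and `Y`; it goes to slot `j₀`.
  let Θ : ∀ j : Fin d, Fin (b j) → Fin (b j) → ℂ := fun j s q =>
    Z.2 j (γ j, s) (γ j, q) + if j = j₀ ∧ s = q then Z.1 γ γ else 0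
  let Y : ∀ j : Fin d, Fin (a j) → Fin (a j) → ℂ := fun j r p =>
    (if r = p ∧ j ≠ j₀ then Z.1 γ γ else 0) - Z.1 (update γ j p) (update γ j r)
  have hΘ : ∀ β, leibnizAct T' Θ β = 0 := fun β => by
    have h := leibnizAct_sub_leibnizAct (T' := T') (j := j₀) (Θ₁ := Θ)
      (Θ₂ := fun j s q => Z.2 j (γ j, s) (γ j, q)) (fun i hi => by simp [Θ, hi]) β
    simp only [Θ, add_sub_cancel_left, true_and, ite_mul, zero_mul, sum_ite_eq, mem_univ,
      if_true, update_eq_self] at h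
    linear_combination starKronAct_diag hZ γ β + h
  have hZ2 : ∀ j p q, Z.2 j p q = kronSum (Y j) (Θ j) p q := by
    rintro j ⟨r, s⟩ ⟨p, q⟩
    rw [starKronAct_block hZ hT' γ j r p s q]
    simp only [kronSum, Θ, Y]
    split_ifs <;> simp_all <;> ring
  refine ⟨Θ, Y, hΘ, fun j hj => by simp [Y, hj], fun β₀ γ₀ => ?_, hZ2⟩
  have h := starKronAct_of_kronSum (T' := T') hZ2 β₀ γ₀ βs
  rw [hZ, hΘ, ite_self, add_zero] at h
  exact sub_eq_zero.1 ((mul_eq_zero.1 h.symm).resolve_right hβs)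

end Annihilator

lemma starKronAct_eq_zero_of_kronSum {Θ : ∀ j : Fin d, Fin (b j) → Fin (b j) → ℂ}
    {Y : ∀ j : Fin d, Fin (a j) → Fin (a j) → ℂ} (hΘ : ∀ β, leibnizAct T' Θ β = 0)
    (h1 : ∀ β₀ γ₀, Z.1 β₀ γ₀ = dualGauge Y β₀ γ₀)
    (h2 : ∀ j p q, Z.2 j p q = kronSum (Y j) (Θ j) p q) (β₀ : ∀ j : Fin d, Fin (a j))
    (β : ∀ j : Fin d, Fin (a j) × Fin (b j)) : starKronAct a b T' Z β₀ β = 0 := by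
  simpa [h1, hΘ] using
    starKronAct_of_kronSum (T' := T') h2 β₀ (fun j => (β j).1) (fun j => (β j).2)

end StarKron

/-- Theorem (isotropy of a Kronecker product with a star graph tensor): for a nonzero
concise tensor `T′ ∈ W′_1⊗⋯⊗W′_d` and the star with `k` edges of bond dimensions
`a_1,…,a_k` (here `a_j = 1` for `j ≥ k`, realizing `V_j = W′_j` as `ℂ^1⊗W′_j`), the
annihilator of `T = S ⊠ T′` under the Leibniz action equals the sum of
(a) the tuples `(0, Id_{U_1}⊗Θ_1, …, Θ_d)` with `(Θ_1,…,Θ_d) ∈ ann(T′)`, and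
(b) for each `j < k`, the gauge tuples acting by `−Yᵀ` on the factor `U_j*` of `V_0` and
by `Y ⊗ Id_{W′_j}` on `V_j`, with `Y ∈ End(U_j)`. -/
theorem ann_starKron {d k : ℕ} (hk1 : 1 ≤ k) (hkd : k ≤ d)
    (a b : Fin d → ℕ) (ha : ∀ j, 1 ≤ a j) (hak : ∀ j : Fin d, k ≤ (j : ℕ) → a j = 1)
    (T' : (∀ j : Fin d, Fin (b j)) → ℂ) (hT'0 : T' ≠ 0) (hT'c : Concise T') :
    { Z : ((∀ j : Fin d, Fin (a j)) → (∀ j : Fin d, Fin (a j)) → ℂ) ×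
        (∀ j : Fin d, (Fin (a j) × Fin (b j)) → (Fin (a j) × Fin (b j)) → ℂ) |
      ∀ (β₀ : ∀ j : Fin d, Fin (a j)) (β : ∀ j : Fin d, Fin (a j) × Fin (b j)),
        (∑ γ₀ : (∀ j : Fin d, Fin (a j)), Z.1 β₀ γ₀ * starKron a b T' (γ₀, β)) +
        (∑ j : Fin d, ∑ γ : Fin (a j) × Fin (b j),
          Z.2 j (β j) γ * starKron a b T' (β₀, Function.update β j γ)) = 0 }
    = { Z | ∃ (Θ : ∀ j : Fin d, Fin (b j) → Fin (b j) → ℂ)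
          (Y : ∀ j : Fin d, Fin (a j) → Fin (a j) → ℂ),
        (∀ β : ∀ j : Fin d, Fin (b j),
          (∑ j : Fin d, ∑ q : Fin (b j), Θ j (β j) q * T' (Function.update β j q)) = 0) ∧
        (∀ j : Fin d, k ≤ (j : ℕ) → Y j = 0) ∧
        (∀ β₀ γ₀ : ∀ j : Fin d, Fin (a j),
          Z.1 β₀ γ₀ = ∑ j : Fin d, -(Y j (γ₀ j) (β₀ j)) *
            ∏ j' : Fin d,
              (if j' = j then (1 : ℂ) else if β₀ j' = γ₀ j' then 1 else 0)) ∧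
        (∀ (j : Fin d) (p q : Fin (a j) × Fin (b j)),
          Z.2 j p q = (if p.1 = q.1 then Θ j p.2 q.2 else 0)
            + Y j p.1 q.1 * (if p.2 = q.2 then 1 else 0)) } := by
  ext Z
  constructor
  · intro hZ
    obtain ⟨Θ, Y, hΘ, hY, h1, h2⟩ := exists_kronSum_of_starKronAct_eq_zero (T' := T') (Z := Z)
      hZ hT'0 hT'c (fun j => ⟨0, ha j⟩) ⟨0, by omega⟩
    refine ⟨Θ, Y, hΘ, fun j hj => ?_, h1, h2⟩
    have : Subsingleton (Fin (a j)) := by rw [hak j hj]; infer_instance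
    funext r p
    rw [Subsingleton.elim r ⟨0, ha j⟩, Subsingleton.elim p ⟨0, ha j⟩]
    exact hY j (Fin.ne_of_val_ne (by simp; omega))
  · rintro ⟨Θ, Y, hΘ, -, h1, h2⟩
    exact starKronAct_eq_zero_of_kronSum (T' := T') (Z := Z) hΘ h1 h2
end

section
/- Let V_1,…,V_d and W_1,…,W_d be finite-dimensional complex vector spaces, let T ∈ V_1⊗⋯⊗V_d and S ∈ W_1⊗⋯⊗W_d be concise tensors, and assume that the annihilator of T under the Leibniz action consists exactly of the traceless scalar tuples: ann(T) = { (x_1·Id_{V_1},…,x_d·Id_{V_d}) : x_1+⋯+x_d = 0 }. Let T⊠S ∈ (V_1⊗W_1)⊗⋯⊗(V_d⊗W_d) denote the Kronecker product, i.e. the image of T⊗S under the canonical regrouping isomorphism (V_1⊗⋯⊗V_d)⊗(W_1⊗⋯⊗W_d) ≅ (V_1⊗W_1)⊗⋯⊗(V_d⊗W_d). Then ann(T⊠S) = { (Id_{V_1}⊗Z_1, …, Id_{V_d}⊗Z_d) : (Z_1,…,Z_d) ∈ ann(S) }. -/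
open scoped BigOperators

/-- The Kronecker product `T ⊠ S ∈ (V_1⊗W_1)⊗⋯⊗(V_d⊗W_d)`, in coordinates. -/
def kron {d : ℕ} {a b : Fin d → ℕ} (T : (∀ j : Fin d, Fin (a j)) → ℂ)
    (S : (∀ j : Fin d, Fin (b j)) → ℂ) : (∀ j : Fin d, Fin (a j) × Fin (b j)) → ℂ :=
  fun β => T (fun j => (β j).1) * S fun j => (β j).2

/-- The annihilator of a tensor under the Leibniz action, in coordinates: the set of
tuples of matrices `X = (X_1,…,X_d)` with `Σ_j (Id⊗⋯⊗X_j⊗⋯⊗Id)(T) = 0`. -/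
def leibAnn {d : ℕ} {ι : Fin d → Type} [∀ j, Fintype (ι j)]
    (T : (∀ j : Fin d, ι j) → ℂ) :
    Set (∀ j : Fin d, ι j → ι j → ℂ) :=
  { X | ∀ β : ∀ j : Fin d, ι j,
      (∑ j : Fin d, ∑ γ : ι j, X j (β j) γ * T (Function.update β j γ)) = 0 }

/-! For `Z ∈ ann(T ⊠ S)` and a multi-index `δ` of `S`, contracting the `W`-factors of `Z`
against `S` at `δ` gives a tuple whose Leibniz action on `T` at `α` is that of `Z` on `T ⊠ S`
at `(α, δ)`. So it lies in `ann(T)` and is a traceless scalar tuple. Conciseness of `S` turns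
this into a statement about `Z` itself: its off-diagonal `V`-blocks vanish and its diagonal
blocks coincide, i.e. `Z = Id ⊗ W`, and the vanishing of the sum of the scalars is `W ∈ ann(S)`.
Conversely `(Id ⊗ W).(T ⊠ S) = T ⊠ (W.S)`. If some `V_j` is zero, conciseness of `T` makes
all of them zero and both sides are everything. -/

open Function Finset

section Leibniz

variable {d : ℕ} {ι : Fin d → Type} [∀ j, Fintype (ι j)]

def leibAct (X : ∀ j : Fin d, ι j → ι j → ℂ) (T : (∀ j : Fin d, ι j) → ℂ)
    (β : ∀ j : Fin d, ι j) : ℂ :=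
  ∑ j : Fin d, ∑ γ : ι j, X j (β j) γ * T (update β j γ)

theorem zero_mem_leibAnn (T : (∀ j : Fin d, ι j) → ℂ) : 0 ∈ leibAnn T := by
  simp [leibAnn]

end Leibniz

section Concise

variable {d : ℕ} {b : Fin d → ℕ} {S : (∀ j : Fin d, Fin (b j)) → ℂ}

theorem Concise.eq_of_forall_sum_eq (hS : Concise S) {i : Fin d} {c c' : Fin (b i) → ℂ}
    (h : ∀ β : ∀ j : Fin d, Fin (b j),
      ∑ p, c p * S (update β i p) = ∑ p, c' p * S (update β i p)) :
    c = c' := by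
  have := hS i (c - c') fun β => by simp [sub_mul, h β]
  exact sub_eq_zero.mp this

theorem Concise.eq_zero_of_eq_zero (hS : Concise S) {j : Fin d} (hj : b j = 0) (i : Fin d) :
    b i = 0 := by
  by_contra hi
  have h1 : (fun _ : Fin (b i) => (1 : ℂ)) = 0 :=
    hS i _ fun β => absurd (β j).isLt (by omega)
  simpa using congrFun h1 ⟨0, Nat.pos_of_ne_zero hi⟩

end Concise

section Kronecker

variable {d : ℕ} {a b : Fin d → ℕ}

theorem fst_update (β : ∀ j : Fin d, Fin (a j) × Fin (b j)) (j : Fin d)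
    (γ : Fin (a j) × Fin (b j)) :
    (fun k => (update β j γ k).1) = update (fun k => (β k).1) j γ.1 :=
  funext (apply_update (fun _ => Prod.fst) β j γ)

theorem snd_update (β : ∀ j : Fin d, Fin (a j) × Fin (b j)) (j : Fin d)
    (γ : Fin (a j) × Fin (b j)) :
    (fun k => (update β j γ k).2) = update (fun k => (β k).2) j γ.2 :=
  funext (apply_update (fun _ => Prod.snd) β j γ)

theorem leibAct_id_kron (T : (∀ j : Fin d, Fin (a j)) → ℂ) (S : (∀ j : Fin d, Fin (b j)) → ℂ)
    (W : ∀ j : Fin d, Fin (b j) → Fin (b j) → ℂ) (β : ∀ j : Fin d, Fin (a j) × Fin (b j)) :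
    leibAct (fun j p q => (if p.1 = q.1 then (1 : ℂ) else 0) * W j p.2 q.2) (kron T S) β
      = T (fun k => (β k).1) * leibAct W S (fun k => (β k).2) := by
  simp only [leibAct, kron, fst_update, snd_update, Fintype.sum_prod_type, ite_mul, one_mul,
    zero_mul, sum_ite_irrel, sum_const_zero, sum_ite_eq, mem_univ, if_true, update_eq_self,
    mul_sum]
  exact sum_congr rfl fun j _ => sum_congr rfl fun γ _ => by ring

def contract (Z : ∀ j : Fin d, Fin (a j) × Fin (b j) → Fin (a j) × Fin (b j) → ℂ)
    (S : (∀ j : Fin d, Fin (b j)) → ℂ) (δ : ∀ j : Fin d, Fin (b j)) :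
    ∀ j : Fin d, Fin (a j) → Fin (a j) → ℂ :=
  fun j p q => ∑ γ : Fin (b j), Z j (p, δ j) (q, γ) * S (update δ j γ)

theorem leibAct_contract (Z : ∀ j : Fin d, Fin (a j) × Fin (b j) → Fin (a j) × Fin (b j) → ℂ)
    (T : (∀ j : Fin d, Fin (a j)) → ℂ) (S : (∀ j : Fin d, Fin (b j)) → ℂ)
    (α : ∀ j : Fin d, Fin (a j)) (δ : ∀ j : Fin d, Fin (b j)) :
    leibAct (contract Z S δ) T α = leibAct Z (kron T S) (fun k => (α k, δ k)) := by
  simp only [leibAct, contract, kron, fst_update, snd_update, Fintype.sum_prod_type, sum_mul]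
  exact sum_congr rfl fun j _ => sum_congr rfl fun p _ => sum_congr rfl fun q _ => by ring

theorem contract_update_self (Z : ∀ j : Fin d, Fin (a j) × Fin (b j) → Fin (a j) × Fin (b j) → ℂ)
    (S : (∀ j : Fin d, Fin (b j)) → ℂ) (β : ∀ j : Fin d, Fin (b j)) (j : Fin d)
    (p q : Fin (a j)) (r : Fin (b j)) :
    contract Z S (update β j r) j p q = ∑ γ, Z j (p, r) (q, γ) * S (update β j γ) := by
  simp only [contract, update_self, update_idem]

theorem Concise.eq_id_kron_of_contract_eq_smul_one {S : (∀ j : Fin d, Fin (b j)) → ℂ}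
    (hS : Concise S) {Z : ∀ j : Fin d, Fin (a j) × Fin (b j) → Fin (a j) × Fin (b j) → ℂ}
    {x : (∀ j : Fin d, Fin (b j)) → Fin d → ℂ}
    (hZ : ∀ δ j p q, contract Z S δ j p q = x δ j * if p = q then 1 else 0)
    {j : Fin d} (p₀ : Fin (a j)) (p q : Fin (a j) × Fin (b j)) :
    Z j p q = (if p.1 = q.1 then (1 : ℂ) else 0) * Z j (p₀, p.2) (p₀, q.2) := by
  obtain ⟨p₁, p₂⟩ := p
  obtain ⟨q₁, q₂⟩ := q
  by_cases h : p₁ = q₁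
  · subst h
    rw [if_pos rfl, one_mul]
    refine congrFun (hS.eq_of_forall_sum_eq (c := fun γ => Z j (p₁, p₂) (p₁, γ))
      (c' := fun γ => Z j (p₀, p₂) (p₀, γ)) fun β => ?_) q₂
    simp only [← contract_update_self, hZ]
  · rw [if_neg h, zero_mul]
    refine congrFun (hS.eq_of_forall_sum_eq (c := fun γ => Z j (p₁, p₂) (q₁, γ)) (c' := 0)
      fun β => ?_) q₂
    simp [← contract_update_self, hZ, h]

theorem leibAnn_kron_subset {T : (∀ j : Fin d, Fin (a j)) → ℂ} {S : (∀ j : Fin d, Fin (b j)) → ℂ}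
    (hS : Concise S)
    (hT : leibAnn T ⊆ { X | ∃ x : Fin d → ℂ, (∑ j : Fin d, x j) = 0 ∧
          ∀ (j : Fin d) (p q : Fin (a j)), X j p q = x j * (if p = q then 1 else 0) })
    (p₀ : ∀ j : Fin d, Fin (a j)) :
    leibAnn (kron T S) ⊆ { Z | ∃ W ∈ leibAnn S,
          ∀ (j : Fin d) (p q : Fin (a j) × Fin (b j)),
            Z j p q = (if p.1 = q.1 then (1 : ℂ) else 0) * W j p.2 q.2 } := by
  intro Z hZ
  have hscalar (δ : ∀ j : Fin d, Fin (b j)) : ∃ x : Fin d → ℂ, (∑ j, x j) = 0 ∧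
      ∀ j p q, contract Z S δ j p q = x j * if p = q then 1 else 0 :=
    hT fun α => (leibAct_contract Z T S α δ).trans (hZ _)
  choose x hx_sum hx using hscalar
  refine ⟨fun j r s => Z j (p₀ j, r) (p₀ j, s), fun δ => ?_,
    fun j => hS.eq_id_kron_of_contract_eq_smul_one hx (p₀ j)⟩
  calc leibAct (fun j r s => Z j (p₀ j, r) (p₀ j, s)) S δ
      = ∑ j, contract Z S δ j (p₀ j) (p₀ j) := rfl
    _ = ∑ j, x δ j := by simp [hx]
    _ = 0 := hx_sum δ

theorem id_kron_subset_leibAnn (T : (∀ j : Fin d, Fin (a j)) → ℂ)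
    (S : (∀ j : Fin d, Fin (b j)) → ℂ) :
    { Z | ∃ W ∈ leibAnn S,
          ∀ (j : Fin d) (p q : Fin (a j) × Fin (b j)),
            Z j p q = (if p.1 = q.1 then (1 : ℂ) else 0) * W j p.2 q.2 } ⊆ leibAnn (kron T S) := by
  rintro Z ⟨W, hW, hZ⟩ β
  obtain rfl : Z = fun j p q => (if p.1 = q.1 then (1 : ℂ) else 0) * W j p.2 q.2 :=
    funext fun j => funext fun p => funext (hZ j p)
  exact (leibAct_id_kron T S W β).trans (mul_eq_zero_of_right _ (hW _))

end Kronecker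

/-- Proposition: if `T` and `S` are concise and the annihilator of `T` consists exactly
of the traceless scalar tuples, then
`ann(T ⊠ S) = { (Id_{V_1}⊗Z_1, …, Id_{V_d}⊗Z_d) : (Z_1,…,Z_d) ∈ ann(S) }`. -/
theorem ann_kron {d : ℕ} (a b : Fin d → ℕ)
    (T : (∀ j : Fin d, Fin (a j)) → ℂ) (S : (∀ j : Fin d, Fin (b j)) → ℂ)
    (hT : Concise T) (hS : Concise S)
    (hannT : leibAnn T
      = { X | ∃ x : Fin d → ℂ, (∑ j : Fin d, x j) = 0 ∧
          ∀ (j : Fin d) (p q : Fin (a j)),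
            X j p q = x j * (if p = q then 1 else 0) }) :
    leibAnn (kron T S)
      = { Z | ∃ W ∈ leibAnn S,
          ∀ (j : Fin d) (p q : Fin (a j) × Fin (b j)),
            Z j p q = (if p.1 = q.1 then (1 : ℂ) else 0) * W j p.2 q.2 } := by
  refine Set.Subset.antisymm ?_ (id_kron_subset_leibAnn T S)
  by_cases ha : ∃ j, a j = 0
  · obtain ⟨j₀, hj₀⟩ := ha
    intro Z _
    refine ⟨0, zero_mem_leibAnn S, fun j p => ?_⟩
    exact absurd p.1.isLt (by simp [hT.eq_zero_of_eq_zero hj₀ j])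
  · push Not at ha
    exact leibAnn_kron_subset hS hannT.le fun j => ⟨0, Nat.pos_of_ne_zero (ha j)⟩
end

section
/- Let V_1,…,V_d be finite-dimensional complex vector spaces and let V′_i ⊆ V_i be subspaces. Let T ∈ V′_1⊗⋯⊗V′_d ⊆ V_1⊗⋯⊗V_d be a tensor that is concise as an element of V′_1⊗⋯⊗V′_d. Then a tuple (X_1,…,X_d) ∈ End(V_1)⊕⋯⊕End(V_d) annihilates T under the Leibniz action if and only if X_i(V′_i) ⊆ V′_i for every i and the tuple of restrictions (X_1|_{V′_1},…,X_d|_{V′_d}) ∈ End(V′_1)⊕⋯⊕End(V′_d) annihilates T, viewed as an element of V′_1⊗⋯⊗V′_d. (Equivalently, fixing complements C_i with V_i = V′_i ⊕ C_i, the annihilator of T in End(V_1)⊕⋯⊕End(V_d) is the direct sum of the annihilator of T in End(V′_1)⊕⋯⊕End(V′_d), extended by zero on the C_i, and the subspace of tuples whose components vanish identically on V′_i.) -/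
open scoped TensorProduct

/-- The Leibniz action of a tuple of endomorphisms `(X_1,…,X_d)` on `⨂ᵢ Vᵢ`:
`X.T = Σ_i (Id⊗⋯⊗X_i⊗⋯⊗Id)(T)`. -/
noncomputable def leibMap {d : ℕ} {V : Fin d → Type*} [∀ i, AddCommGroup (V i)]
    [∀ i, Module ℂ (V i)] (X : ∀ i, V i →ₗ[ℂ] V i) :
    (⨂[ℂ] i, V i) →ₗ[ℂ] ⨂[ℂ] i, V i :=
  ∑ i : Fin d,
    PiTensorProduct.map (Function.update (fun j => (LinearMap.id : V j →ₗ[ℂ] V j)) i (X i))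

/-- Conciseness of a tensor `T ∈ ⨂ᵢ Vᵢ` (of finite-dimensional spaces): any functional
`φ` on the `i`-th factor such that every full contraction of `T` using `φ` in slot `i`
vanishes must be zero; equivalently, every flattening map `Vᵢ* → ⨂_{j≠i} Vⱼ` is
injective. -/
def PiConcise {d : ℕ} {V : Fin d → Type*} [∀ i, AddCommGroup (V i)]
    [∀ i, Module ℂ (V i)] (T : ⨂[ℂ] i, V i) : Prop :=
  ∀ (i : Fin d) (φ : V i →ₗ[ℂ] ℂ),
    (∀ χ : ∀ j, V j →ₗ[ℂ] ℂ, χ i = φ →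
      PiTensorProduct.lift
        ((MultilinearMap.mkPiAlgebra ℂ (Fin d) ℂ).compLinearMap χ) T = 0) → φ = 0

/-!
Choose projections `pⱼ : Vⱼ → V′ⱼ` splitting the inclusions. If `X.T = 0` and `φ` is a
functional on `Vᵢ` vanishing on `V′ᵢ`, contract `X.T` with `φ` in slot `i` and with arbitrary
functionals `χⱼ ∘ pⱼ` in the other slots. The Leibniz terms that do not act on slot `i` see `φ`
on `V′ᵢ` and vanish, so what remains is the contraction of `T` against `φ ∘ Xᵢ|_{V′ᵢ}` in slot `i`.
Conciseness forces `φ ∘ Xᵢ|_{V′ᵢ} = 0` for every such `φ`, i.e. `Xᵢ(V′ᵢ) ⊆ V′ᵢ`. The Leibniz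
action commutes with the inclusion `⨂ V′ᵢ → ⨂ Vᵢ`, which is injective, and this gives both
directions of the equivalence.
-/

open PiTensorProduct Function

section Contraction

variable {ι R : Type*} [Fintype ι] [CommSemiring R] {M N : ι → Type*}
  [∀ i, AddCommMonoid (M i)] [∀ i, Module R (M i)]
  [∀ i, AddCommMonoid (N i)] [∀ i, Module R (N i)]

noncomputable def piContract (χ : ∀ i, M i →ₗ[R] R) : (⨂[R] i, M i) →ₗ[R] R :=
  lift ((MultilinearMap.mkPiAlgebra R ι R).compLinearMap χ)

theorem piContract_map (χ : ∀ i, N i →ₗ[R] R) (f : ∀ i, M i →ₗ[R] N i) (t : ⨂[R] i, M i) :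
    piContract χ (map f t) = piContract (fun i => χ i ∘ₗ f i) t :=
  LinearMap.congr_fun (lift_comp_map _ _) t

theorem piContract_eq_zero_of_eq_zero (χ : ∀ i, M i →ₗ[R] R) {i : ι} (hχ : χ i = 0) :
    piContract χ = 0 := by
  ext m
  simp [piContract, Finset.prod_eq_zero (Finset.mem_univ i), hχ]

end Contraction

theorem PiTensorProduct.map_injective_of_leftInverse {ι R : Type*} [CommSemiring R]
    {M N : ι → Type*} [∀ i, AddCommMonoid (M i)] [∀ i, Module R (M i)]
    [∀ i, AddCommMonoid (N i)] [∀ i, Module R (N i)]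
    (f : ∀ i, M i →ₗ[R] N i) (g : ∀ i, N i →ₗ[R] M i) (hgf : ∀ i, g i ∘ₗ f i = .id) :
    Injective (map f) := by
  refine LeftInverse.injective (g := map g) fun t => ?_
  rw [← LinearMap.comp_apply, ← map_comp, funext hgf, map_id, LinearMap.id_apply]

theorem PiTensorProduct.map_subtype_injective {ι K : Type*} [Field K] {V : ι → Type*}
    [∀ i, AddCommGroup (V i)] [∀ i, Module K (V i)] (V' : ∀ i, Submodule K (V i)) :
    Injective (map fun i => (V' i).subtype) := by
  choose p hp using fun i => (V' i).subtype.exists_leftInverse_of_injective (V' i).ker_subtype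
  exact map_injective_of_leftInverse _ p hp

section Leibniz

variable {d : ℕ} {V W : Fin d → Type*}
  [∀ i, AddCommGroup (V i)] [∀ i, Module ℂ (V i)]
  [∀ i, AddCommGroup (W i)] [∀ i, Module ℂ (W i)]

theorem map_leibMap (f : ∀ i, W i →ₗ[ℂ] V i) (X : ∀ i, V i →ₗ[ℂ] V i)
    (X' : ∀ i, W i →ₗ[ℂ] W i) (hX : ∀ i, X i ∘ₗ f i = f i ∘ₗ X' i) (t : ⨂[ℂ] i, W i) :
    map f (leibMap X' t) = leibMap X (map f t) := by
  simp only [leibMap, LinearMap.sum_apply, map_sum]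
  refine Finset.sum_congr rfl fun k _ => ?_
  rw [← LinearMap.comp_apply, ← LinearMap.comp_apply, ← map_comp, ← map_comp]
  refine LinearMap.congr_fun (congrArg map (funext fun j => ?_)) t
  by_cases hj : j = k
  · subst hj
    simp [hX]
  · simp [update_of_ne hj]

theorem piContract_leibMap (η : ∀ i, V i →ₗ[ℂ] ℂ) (X : ∀ i, V i →ₗ[ℂ] V i)
    (t : ⨂[ℂ] i, V i) :
    piContract η (leibMap X t) = ∑ k, piContract (update η k (η k ∘ₗ X k)) t := by
  simp only [leibMap, LinearMap.sum_apply, map_sum, piContract_map]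
  refine Finset.sum_congr rfl fun k _ => LinearMap.congr_fun (congrArg piContract
    (funext fun j => ?_)) t
  by_cases hj : j = k
  · subst hj
    simp
  · simp [update_of_ne hj]

theorem mem_of_leibMap_map_subtype_eq_zero (V' : ∀ i, Submodule ℂ (V i))
    {T' : ⨂[ℂ] i, (V' i : Type _)} (hT' : PiConcise T') {X : ∀ i, V i →ₗ[ℂ] V i}
    (hX : leibMap X (map (fun i => (V' i).subtype) T') = 0) (i : Fin d) {w : V i}
    (hw : w ∈ V' i) : X i w ∈ V' i := by
  choose p hp using fun j => (V' j).subtype.exists_leftInverse_of_injective (V' j).ker_subtype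
  rw [← Subspace.forall_mem_dualAnnihilator_apply_eq_zero_iff]
  intro φ hφ
  rw [Submodule.mem_dualAnnihilator] at hφ
  suffices φ ∘ₗ X i ∘ₗ (V' i).subtype = 0 from LinearMap.congr_fun this ⟨w, hw⟩
  refine hT' i _ fun χ hχ => ?_
  set η := update (fun j => χ j ∘ₗ p j) i φ
  have hoff : ∀ k ≠ i,
      piContract (update η k (η k ∘ₗ X k)) (map (fun j => (V' j).subtype) T') = 0 := by
    intro k hk
    rw [piContract_map, piContract_eq_zero_of_eq_zero _ (i := i) (LinearMap.ext fun v => ?_),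
      LinearMap.zero_apply]
    simp [η, update_of_ne hk.symm, hφ _ v.2]
  have hdiag : piContract (update η i (η i ∘ₗ X i)) (map (fun j => (V' j).subtype) T') =
      piContract χ T' := by
    rw [piContract_map]
    refine LinearMap.congr_fun (congrArg piContract (funext fun j => ?_)) T'
    by_cases hj : j = i
    · subst hj
      simp [η, hχ, LinearMap.comp_assoc]
    · simp [η, update_of_ne hj, LinearMap.comp_assoc, hp]
  show piContract χ T' = 0
  calc piContract χ T'
      = piContract η (leibMap X (map (fun j => (V' j).subtype) T')) := by
        rw [piContract_leibMap, Finset.sum_eq_single i (fun k _ hk => hoff k hk) (by simp), hdiag]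
    _ = 0 := by rw [hX, map_zero]

end Leibniz

theorem ann_of_nonconcise_general {d : ℕ} {V : Fin d → Type*} [∀ i, AddCommGroup (V i)]
    [∀ i, Module ℂ (V i)]
    (V' : ∀ i, Submodule ℂ (V i)) (T' : ⨂[ℂ] i, (V' i : Type _))
    (hT'c : PiConcise T')
    (X : ∀ i, V i →ₗ[ℂ] V i) :
    leibMap X (PiTensorProduct.map (fun i => (V' i).subtype) T') = 0 ↔
      ∃ X' : ∀ i, (V' i : Type _) →ₗ[ℂ] (V' i : Type _),
        (∀ (i : Fin d) (w : V' i), X i (w : V i) = ((X' i w : V' i) : V i)) ∧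
        leibMap X' T' = 0 := by
  have hnat (X' : ∀ i, V' i →ₗ[ℂ] V' i) (hX' : ∀ i (w : V' i), X i w = X' i w) :
      map (fun i => (V' i).subtype) (leibMap X' T') =
        leibMap X (map (fun i => (V' i).subtype) T') :=
    map_leibMap _ X X' (fun i => LinearMap.ext (hX' i)) T'
  constructor
  · intro hX
    refine ⟨fun i => (X i).restrict fun w hw => mem_of_leibMap_map_subtype_eq_zero V' hT'c hX i hw,
      fun i w => rfl, map_subtype_injective V' ?_⟩
    rw [hnat _ fun i w => rfl, hX, map_zero]
  · rintro ⟨X', hX', hX'T⟩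
    rw [← hnat X' hX', hX'T, map_zero]

/-- Lemma (annihilator of a non-concise tensor): let `V′ᵢ ⊆ Vᵢ` be subspaces and let
`T′ ∈ ⨂ᵢ V′ᵢ` be concise, with image `T ∈ ⨂ᵢ Vᵢ`.  A tuple `(X_1,…,X_d)` of
endomorphisms of the `Vᵢ` annihilates `T` under the Leibniz action if and only if each
`Xᵢ` preserves `V′ᵢ` and the tuple of restrictions annihilates `T′`. -/
theorem ann_of_nonconcise {d : ℕ} {V : Fin d → Type*} [∀ i, AddCommGroup (V i)]
    [∀ i, Module ℂ (V i)] [∀ i, FiniteDimensional ℂ (V i)]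
    (V' : ∀ i, Submodule ℂ (V i)) (T' : ⨂[ℂ] i, (V' i : Type _))
    (hT'c : PiConcise T')
    (X : ∀ i, V i →ₗ[ℂ] V i) :
    leibMap X (PiTensorProduct.map (fun i => (V' i).subtype) T') = 0 ↔
      ∃ X' : ∀ i, (V' i : Type _) →ₗ[ℂ] (V' i : Type _),
        (∀ (i : Fin d) (w : V' i), X i (w : V i) = ((X' i w : V' i) : V i)) ∧
        leibMap X' T' = 0 :=
  ann_of_nonconcise_general V' T' hT'c X
end

section
/- Let d ≥ 3, m ≥ 1 be integers and let n_1,…,n_d ≥ 1 be integers with n_j ≥ 2 for at least one j (indices taken modulo d). Then the action of the gauge group of the cycle graph with constant bond dimension m on the parametrizing space of matrix product states is generically stable: there exist linear maps X_j : M_m(ℂ) → ℂ^{n_j} for j ∈ ℤ/d such that the projective stabilizer H̃ = { (g_1,…,g_d) ∈ GL_m(ℂ)^d : there exist μ_1,…,μ_d ∈ ℂ* with μ_1⋯μ_d = 1 such that for all j ∈ ℤ/d and all M ∈ M_m(ℂ), X_j(g_j · M · g_{j+1}⁻¹) = μ_j · X_j(M) } has finite image in PGL_m(ℂ)^d; equivalently,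 H̃ is a finite union of cosets of the subgroup { (λ·I,…,λ·I) : λ ∈ ℂ* } of GL_m(ℂ)^d. -/
open Matrix Fin.NatCast

/-!
Take `X_j = tr` in every coordinate for `j ≠ j₀`, and `X_{j₀} = (tr (A ·), tr (B ·), …)` with
`A = diag(0, 1, …, m - 1)` and `B` the all-ones matrix. For `j ≠ j₀` the equation
`tr (g_{j+1}⁻¹ g_j M) = μ_j tr M` forces `g_j = μ_j g_{j+1}`; these `d - 1` edges form a path through
the whole cycle, so all `g_j` are proportional and `g_{j₀}⁻¹ A g_{j₀} = α A`,
`g_{j₀}⁻¹ B g_{j₀} = α B` for one scalar `α`. Taking traces (`tr B = m ≠ 0`) gives `α = 1`, and a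
matrix commuting with `A` (distinct eigenvalues) and with `B` is scalar.
-/

namespace Fin

theorem rel_of_rel_add_one_of_ne {α : Type*} {r : α → α → Prop} (hr : Equivalence r)
    {d : ℕ} [NeZero d] {f : Fin d → α} (j₀ : Fin d)
    (h : ∀ j, j ≠ j₀ → r (f j) (f (j + 1))) (i j : Fin d) : r (f i) (f j) := by
  have hpath : ∀ k : ℕ, k < d → r (f (j₀ + 1)) (f (j₀ + 1 + (k : Fin d))) := by
    intro k hk
    induction k with
    | zero => simpa using hr.refl _
    | succ k ih =>
      have hne : j₀ + 1 + (k : Fin d) ≠ j₀ := by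
        rw [add_assoc, Ne, add_eq_left, ← Nat.cast_one, ← Nat.cast_add, natCast_eq_zero]
        exact Nat.not_dvd_of_pos_of_lt (by omega) (by omega)
      simpa [add_assoc] using hr.trans (ih (by omega)) (h _ hne)
  have hall : ∀ i, r (f (j₀ + 1)) (f i) := fun i => by
    simpa using hpath (i - (j₀ + 1)).val (i - (j₀ + 1)).isLt
  exact hr.trans (hr.symm (hall i)) (hall j)

end Fin

namespace Matrix

variable {n R : Type*} [Fintype n] [CommRing R]

def traceForms {ι : Type*} (C : ι → Matrix n n R) : Matrix n n R →ₗ[R] ι → R :=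
  LinearMap.pi fun i => traceLinearMap n R R ∘ₗ LinearMap.mulLeft R (C i)

theorem traceForms_apply {ι : Type*} (C : ι → Matrix n n R) (M : Matrix n n R) (i : ι) :
    traceForms C M i = trace (C i * M) :=
  rfl

theorem mul_mul_eq_smul_of_traceForms {ι : Type*} {C : ι → Matrix n n R} {P Q : Matrix n n R}
    {μ : R} (h : ∀ M, traceForms C (P * M * Q) = μ • traceForms C M) (i : ι) :
    Q * C i * P = μ • C i := by
  refine ext_iff_trace_mul_right.mpr fun M => ?_
  calc trace (Q * C i * P * M) = trace (C i * (P * M * Q)) := by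
        simp only [Matrix.mul_assoc]
        rw [trace_mul_comm Q]
        simp only [Matrix.mul_assoc]
    _ = μ * trace (C i * M) := congrFun (h M) i
    _ = trace (μ • C i * M) := by rw [smul_mul_assoc, trace_smul, smul_eq_mul]

variable [DecidableEq n]

theorem eq_smul_of_nonsing_inv_mul_eq_smul_one {A B : Matrix n n R} {μ : R} (hB : IsUnit B.det)
    (h : B⁻¹ * A = μ • 1) : A = μ • B := by
  calc A = B * (B⁻¹ * A) := (mul_nonsing_inv_cancel_left B A hB).symm
    _ = μ • B := by rw [h, mul_smul_comm, Matrix.mul_one]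

theorem commute_of_nonsing_inv_mul_mul_eq {C g : Matrix n n R} (hg : IsUnit g.det)
    (h : g⁻¹ * C * g = C) : Commute C g := by
  have hg' := congrArg (g * ·) h
  simp only [← Matrix.mul_assoc, mul_nonsing_inv _ hg, Matrix.one_mul] at hg'
  exact hg'

theorem nonsing_inv_mul_mul_eq_smul_of_units_smul {C g h : Matrix n n R} {u : Rˣ} {μ : R}
    (hg : IsUnit g.det) (hC : (u • g)⁻¹ * C * h = μ • C) : g⁻¹ * C * h = (u * μ) • C := by
  rw [inv_smul' _ _ hg, smul_mul_assoc, smul_mul_assoc, inv_smul_eq_iff] at hC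
  rw [hC, Units.smul_def, smul_smul]

variable [NoZeroDivisors R]

theorem eq_one_of_nonsing_inv_mul_mul_eq_smul {C g : Matrix n n R} {α : R}
    (hg : IsUnit g.det) (hC : C.trace ≠ 0) (h : g⁻¹ * C * g = α • C) : α = 1 := by
  have htrace : trace (g⁻¹ * C * g) = trace C := by
    rw [trace_mul_cycle, mul_nonsing_inv _ hg, Matrix.one_mul]
  rw [h, trace_smul, smul_eq_mul] at htrace
  exact mul_right_cancel₀ hC (htrace.trans (one_mul _).symm)

theorem eq_diagonal_diag_of_commute_diagonal {v : n → R} (hv : Function.Injective v)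
    {g : Matrix n n R} (h : Commute (diagonal v) g) : g = diagonal g.diag := by
  ext i j
  rcases eq_or_ne i j with rfl | hij
  · simp
  have hij' := congrFun₂ h.eq i j
  rw [diagonal_mul, mul_diagonal, mul_comm, ← sub_eq_zero, ← mul_sub] at hij'
  rw [diagonal_apply_ne _ hij]
  exact (mul_eq_zero.mp hij').resolve_right (sub_ne_zero.mpr (hv.ne hij))

theorem exists_eq_smul_one_of_commute {v : n → R} (hv : Function.Injective v) {g : Matrix n n R}
    (hA : Commute (diagonal v) g) (hB : Commute (of fun _ _ => (1 : R)) g) :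
    ∃ c : R, g = c • 1 := by
  cases isEmpty_or_nonempty n
  · exact ⟨0, Subsingleton.elim _ _⟩
  have hdiag := eq_diagonal_diag_of_commute_diagonal hv hA
  have hconst : ∀ i j, g i i = g j j := fun i j => by
    have hji := congrFun₂ hB.eq j i
    rw [hdiag] at hji
    simpa using hji
  obtain ⟨i₀⟩ := ‹Nonempty n›
  refine ⟨g i₀ i₀, hdiag.trans ?_⟩
  rw [smul_one_eq_diagonal]
  exact congrArg diagonal (funext fun i => hconst i i₀)

theorem exists_eq_smul_one_of_nonsing_inv_mul_mul_eq_smul {v : n → R}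
    (hv : Function.Injective v) (hn : (Fintype.card n : R) ≠ 0) {g : Matrix n n R}
    (hg : IsUnit g.det) {α : R} (hA : g⁻¹ * diagonal v * g = α • diagonal v)
    (hB : g⁻¹ * of (fun _ _ => 1) * g = α • of fun _ _ => 1) :
    ∃ c : Rˣ, g = c • 1 := by
  have hα : α = 1 := eq_one_of_nonsing_inv_mul_mul_eq_smul hg (by simpa [trace] using hn) hB
  rw [hα, one_smul] at hA hB
  obtain ⟨c, rfl⟩ := exists_eq_smul_one_of_commute hv (commute_of_nonsing_inv_mul_mul_eq hg hA)
    (commute_of_nonsing_inv_mul_mul_eq hg hB)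
  rw [det_smul, det_one, mul_one, isUnit_pow_iff (by rintro h; simp [h] at hn)] at hg
  exact ⟨hg.unit, rfl⟩

end Matrix

theorem MPS_gauge_generically_stable_general (d m : ℕ) [NeZero d] (hm : 1 ≤ m)
    (n : Fin d → ℕ) (hn : ∀ j, 1 ≤ n j) (hn2 : ∃ j, 2 ≤ n j) :
    ∃ X : ∀ j : Fin d, Matrix (Fin m) (Fin m) ℂ →ₗ[ℂ] (Fin (n j) → ℂ),
      ∃ F : Finset (Fin d → Matrix (Fin m) (Fin m) ℂ),
        ∀ g : Fin d → Matrix (Fin m) (Fin m) ℂ,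
          ((∀ j, IsUnit (g j)) ∧
            ∃ μ : Fin d → ℂ, (∀ j, μ j ≠ 0) ∧ (∏ j, μ j) = 1 ∧
              ∀ (j : Fin d) (M : Matrix (Fin m) (Fin m) ℂ),
                X j (g j * M * (g (j + 1))⁻¹) = μ j • X j M) →
          ∃ h ∈ F, ∃ c : Fin d → ℂ, (∀ j, c j ≠ 0) ∧ ∀ j, g j = c j • h j := by
  obtain ⟨j₀, hj₀⟩ := hn2
  let A : Matrix (Fin m) (Fin m) ℂ := diagonal fun i => ((i : ℕ) : ℂ)
  let B : Matrix (Fin m) (Fin m) ℂ := of fun _ _ => 1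
  let C (j : Fin d) (i : Fin (n j)) : Matrix (Fin m) (Fin m) ℂ :=
    if j ≠ j₀ then 1 else if (i : ℕ) = 0 then A else B
  refine ⟨fun j => traceForms (C j), {1}, ?_⟩
  rintro g ⟨hg, μ, hμ, -, hX⟩
  have hdet j : IsUnit (g j).det := (isUnit_iff_isUnit_det _).mp (hg j)
  have hconj j i : (g (j + 1))⁻¹ * C j i * g j = μ j • C j i :=
    mul_mul_eq_smul_of_traceForms (hX j) i
  have hstep j (hj : j ≠ j₀) : MulAction.orbitRel ℂˣ _ (g j) (g (j + 1)) := by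
    have h1 := hconj j ⟨0, hn j⟩
    simp only [C, hj, ne_eq, not_false_eq_true, if_true, Matrix.mul_one] at h1
    exact ⟨Units.mk0 (μ j) (hμ j), (eq_smul_of_nonsing_inv_mul_eq_smul_one (hdet _) h1).symm⟩
  have hr := (MulAction.orbitRel ℂˣ (Matrix (Fin m) (Fin m) ℂ)).iseqv
  have hrel := Fin.rel_of_rel_add_one_of_ne hr j₀ hstep
  obtain ⟨u, hu : u • g j₀ = g (j₀ + 1)⟩ := hrel (j₀ + 1) j₀
  have hconj₀ i : (g j₀)⁻¹ * C j₀ i * g j₀ = (u * μ j₀) • C j₀ i :=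
    nonsing_inv_mul_mul_eq_smul_of_units_smul (hdet j₀) (hu ▸ hconj j₀ i)
  have hA := hconj₀ ⟨0, by omega⟩
  have hB := hconj₀ ⟨1, hj₀⟩
  simp only [C, ne_eq, not_true_eq_false, one_ne_zero, ↓reduceIte] at hA hB
  obtain ⟨c, hc⟩ := exists_eq_smul_one_of_nonsing_inv_mul_mul_eq_smul
    (fun _ _ h => Fin.ext (Nat.cast_injective h)) (by rw [Fintype.card_fin, Nat.cast_ne_zero]; omega) (hdet j₀) hA hB
  choose w hw using fun j => hr.trans (hrel j j₀) ⟨c, hc.symm⟩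
  exact ⟨1, Finset.mem_singleton_self _, fun j => w j, fun j => (w j).ne_zero, fun j => (hw j).symm⟩

/-- Proposition (generic stability of the gauge action for matrix product states on the
cycle): for `d ≥ 3`, constant bond dimension `m`, and local dimensions `n_j` with
`n_j ≥ 2` for at least one `j`, there exists a tuple of linear maps
`X_j : M_m(ℂ) → ℂ^{n_j}` whose lifted projective stabilizer
`H̃ = { (g_j) ∈ GL_m(ℂ)^d : ∃ μ_j ∈ ℂ*, ∏ μ_j = 1, X_j(g_j M g_{j+1}⁻¹) = μ_j X_j(M) }`
has finite image in `PGL_m(ℂ)^d`, i.e. is finite modulo componentwise scalars. -/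
theorem MPS_gauge_generically_stable (d m : ℕ) [NeZero d] (hd : 3 ≤ d) (hm : 1 ≤ m)
    (n : Fin d → ℕ) (hn : ∀ j, 1 ≤ n j) (hn2 : ∃ j, 2 ≤ n j) :
    ∃ X : ∀ j : Fin d, Matrix (Fin m) (Fin m) ℂ →ₗ[ℂ] (Fin (n j) → ℂ),
      ∃ F : Finset (Fin d → Matrix (Fin m) (Fin m) ℂ),
        ∀ g : Fin d → Matrix (Fin m) (Fin m) ℂ,
          ((∀ j, IsUnit (g j)) ∧
            ∃ μ : Fin d → ℂ, (∀ j, μ j ≠ 0) ∧ (∏ j, μ j) = 1 ∧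
              ∀ (j : Fin d) (M : Matrix (Fin m) (Fin m) ℂ),
                X j (g j * M * (g (j + 1))⁻¹) = μ j • X j M) →
          ∃ h ∈ F, ∃ c : Fin d → ℂ, (∀ j, c j ≠ 0) ∧ ∀ j, g j = c j • h j :=
  MPS_gauge_generically_stable_general d m hm n hn hn2
end
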